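/- arXiv:1211.2384 — 12 statements merged into one kernel-verified Lean document; each statement's English description precedes it below -/
import Mathlib

section
/- Let G=(V,E) be a finite connected undirected simple graph, let r>0 be real, and let f be a fixation function for the generalized Moran process on G with fitness r. Then for every vertex v ∈ V, f({v}) ≤ r / (r + Σ_{x∈N(v)} 1/deg(x)), where N(v) denotes the set of neighbours of v in G. -/
/-- `f` is a fixation function for the generalized Moran process on `G` with fitness `r`. -/
def IsFixation {V : Type*} [Fintype V] [DecidableEq V] (G : SimpleGraph V)
    [DecidableRel G.Adj] (r : ℝ) (f : Finset V → ℝ) : Prop :=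
  (∀ S : Finset V, 0 ≤ f S ∧ f S ≤ 1) ∧ f ∅ = 0 ∧ f Finset.univ = 1 ∧
  ∀ S : Finset V, S ≠ ∅ → S ≠ Finset.univ →
    f S * ∑ a ∈ S, ∑ b ∈ Sᶜ,
      (if G.Adj a b then r / (G.degree a : ℝ) + 1 / (G.degree b : ℝ) else 0)
    = ∑ a ∈ S, ∑ b ∈ Sᶜ,
      (if G.Adj a b then r / (G.degree a : ℝ) * f (insert b S)
        + 1 / (G.degree b : ℝ) * f (S.erase a) else 0)

theorem fixation_single_upper_bound {V : Type*} [Fintype V] [DecidableEq V]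
    (G : SimpleGraph V) [DecidableRel G.Adj] (hconn : G.Connected)
    (r : ℝ) (hr : 0 < r) (f : Finset V → ℝ) (hf : IsFixation G r f) (v : V) :
    f {v} ≤ r / (r + ∑ x ∈ G.neighborFinset v, 1 / (G.degree x : ℝ)) := by
  obtain ⟨hbd, h0, h1, heq⟩ := hf
  by_cases huniv : ({v} : Finset V) = Finset.univ
  · -- single vertex: neighborFinset empty
    have hNv : G.neighborFinset v = ∅ := by
      ext x
      simp only [SimpleGraph.mem_neighborFinset, Finset.notMem_empty, iff_false]
      intro hadj
      have : x ∈ ({v} : Finset V) := huniv ▸ Finset.mem_univ x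
      simp at this
      exact G.irrefl (this ▸ hadj)
    rw [hNv]
    simp [huniv ▸ h1, le_div_iff₀ hr]
  · -- v has a neighbor
    have hadjex : ∃ w, G.Adj v w := by
      obtain ⟨w, hw⟩ : ∃ w, w ∉ ({v} : Finset V) := by
        by_contra h
        push_neg at h
        exact huniv (Finset.eq_univ_iff_forall.mpr h)
      have hvw : v ≠ w := by rintro rfl; simp at hw
      obtain ⟨p⟩ := hconn.preconnected v w
      cases p with
      | nil => exact absurd rfl hvw
      | cons h _ => exact ⟨_, h⟩
    have hdegpos : 0 < G.degree v := (G.degree_pos_iff_exists_adj v).mpr hadjex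
    have hdegR : (0:ℝ) < (G.degree v : ℝ) := by exact_mod_cast hdegpos
    have key := heq {v} (by simp) huniv
    rw [Finset.sum_singleton, Finset.sum_singleton] at key
    -- rewrite the sums over {v}ᶜ as sums over neighborFinset v
    have hfilter : Finset.filter (G.Adj v) ({v} : Finset V)ᶜ = G.neighborFinset v := by
      ext b
      simp only [Finset.mem_filter, Finset.mem_compl, Finset.mem_singleton,
        SimpleGraph.mem_neighborFinset]
      exact ⟨fun h => h.2, fun h => ⟨fun hb => G.irrefl (hb ▸ h), h⟩⟩
    have hL : (∑ b ∈ ({v} : Finset V)ᶜ,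
        (if G.Adj v b then r / (G.degree v : ℝ) + 1 / (G.degree b : ℝ) else 0))
        = r + ∑ x ∈ G.neighborFinset v, 1 / (G.degree x : ℝ) := by
      rw [← Finset.sum_filter, hfilter, Finset.sum_add_distrib, Finset.sum_const,
        SimpleGraph.card_neighborFinset_eq_degree]
      rw [nsmul_eq_mul]
      field_simp
    have hR : (∑ b ∈ ({v} : Finset V)ᶜ,
        (if G.Adj v b then r / (G.degree v : ℝ) * f (insert b {v})
          + 1 / (G.degree b : ℝ) * f (({v}:Finset V).erase v) else 0))
        ≤ r := by
      rw [← Finset.sum_filter, hfilter]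
      have herase : ({v}:Finset V).erase v = ∅ := by simp
      calc ∑ b ∈ G.neighborFinset v, (r / (G.degree v : ℝ) * f (insert b {v})
            + 1 / (G.degree b : ℝ) * f (({v}:Finset V).erase v))
          ≤ ∑ _b ∈ G.neighborFinset v, r / (G.degree v : ℝ) := by
            apply Finset.sum_le_sum
            intro b _
            rw [herase, h0, mul_zero, add_zero]
            have := (hbd (insert b {v})).2
            have hrd : 0 ≤ r / (G.degree v : ℝ) := le_of_lt (div_pos hr hdegR)
            nlinarith
        _ = r := by
            rw [Finset.sum_const, SimpleGraph.card_neighborFinset_eq_degree, nsmul_eq_mul]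
            field_simp
    have hT : 0 ≤ ∑ x ∈ G.neighborFinset v, 1 / (G.degree x : ℝ) := by
      apply Finset.sum_nonneg
      intro x _
      positivity
    have hpos : 0 < r + ∑ x ∈ G.neighborFinset v, 1 / (G.degree x : ℝ) := by linarith
    rw [le_div_iff₀ hpos, ← hL]
    rw [hL] at key ⊢
    linarith [key ▸ hR]
end

section
/- Under the hypotheses of the context (the absorption probabilities h_0,…,h_{k+1} of the Markov chain M_k^1), it holds that h_k ≥ 1 − 2/(n(r−1)+1). -/
set_option maxHeartbeats 1600000

/-- Lower bound `h_k ≥ 1 - 2/(n(r-1)+1)` for the absorption probabilities of the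
Markov chain `M_k^1`. -/
theorem hk_lower_bound (n k : ℕ) (hn : 1 ≤ n) (hk1 : 1 ≤ k) (hk2 : k ≤ n - 1)
    (r : ℝ) (hr : 1 < r) (h : ℕ → ℝ)
    (hbound : ∀ i ≤ k + 1, 0 ≤ h i ∧ h i ≤ 1)
    (htop : h (k + 1) = 1)
    (hzero : h 0 = (r * n / (r * n + 1)) * h 1)
    (hrec : ∀ i, 1 ≤ i → i ≤ k →
      h i = (r * (((k : ℝ) - i) * n + i * ((n : ℝ) - i)) / n * h (i + 1)
              + ((i : ℝ) * ((n : ℝ) - i) / n) * h (i - 1))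
        / (r * (((k : ℝ) - i) * n + i * ((n : ℝ) - i)) / n
              + (i : ℝ) * ((n : ℝ) - i) / n + ((k : ℝ) - i) / n)) :
    h k ≥ 1 - 2 / ((n : ℝ) * (r - 1) + 1) := by
  have hn' : (1:ℝ) ≤ (n:ℝ) := by exact_mod_cast hn
  have hn0 : (0:ℝ) < (n:ℝ) := by linarith
  have hkn : (k:ℝ) + 1 ≤ (n:ℝ) := by
    have : k + 1 ≤ n := by omega
    exact_mod_cast this
  have hr0 : (0:ℝ) < r := by linarith
  have hD : (0:ℝ) < (n:ℝ) * (r - 1) := by nlinarith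
  have key : ∀ i, i ≤ k → 0 ≤ h (i+1) - h i ∧ h (i+1) - h i ≤ 1 / ((n:ℝ)*(r-1)) := by
    intro i
    induction i with
    | zero =>
      intro _
      have h1b := hbound 1 (by omega)
      have hrn : (0:ℝ) < r * n + 1 := by nlinarith
      have hd0 : h 1 - h 0 = h 1 / (r * n + 1) := by
        rw [hzero]; field_simp; ring
      constructor
      · rw [hd0]; exact div_nonneg h1b.1 hrn.le
      · rw [hd0, div_le_div_iff₀ hrn hD]
        nlinarith [h1b.1, h1b.2]
    | succ i ih =>
      intro hik
      obtain ⟨ih1, ih2⟩ := ih (by omega)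
      have E := hrec (i+1) (by omega) hik
      simp only [Nat.add_sub_cancel] at E
      push_cast at E
      have hik' : (i:ℝ) + 1 ≤ (k:ℝ) := by exact_mod_cast hik
      set A := r * (((k:ℝ) - ((i:ℝ) + 1)) * (n:ℝ) + ((i:ℝ) + 1) * ((n:ℝ) - ((i:ℝ) + 1))) / (n:ℝ) with hA
      set B := ((i:ℝ) + 1) * ((n:ℝ) - ((i:ℝ) + 1)) / (n:ℝ) with hB
      set G := ((k:ℝ) - ((i:ℝ) + 1)) / (n:ℝ) with hG
      clear_value A B G
      have hni : (1:ℝ) ≤ (n:ℝ) - ((i:ℝ) + 1) := by linarith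
      have hi0 : (0:ℝ) ≤ (i:ℝ) := Nat.cast_nonneg i
      have hBpos : (0:ℝ) < B := by
        rw [hB]; exact div_pos (by nlinarith) hn0
      have hGnn : (0:ℝ) ≤ G := by
        rw [hG]; exact div_nonneg (by linarith) hn0.le
      have hApos : (0:ℝ) < A := by
        have hnum : (0:ℝ) < ((k:ℝ) - ((i:ℝ) + 1)) * (n:ℝ) + ((i:ℝ) + 1) * ((n:ℝ) - ((i:ℝ) + 1)) := by
          nlinarith [mul_nonneg (show (0:ℝ) ≤ (k:ℝ) - ((i:ℝ)+1) by linarith) hn0.le]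
        rw [hA]; exact div_pos (mul_pos hr0 hnum) hn0
      have hden : (0:ℝ) < A + B + G := by linarith
      rw [eq_div_iff hden.ne'] at E
      have hAB : A = r * ((n:ℝ) * G + B) := by
        rw [hA, hB, hG]; field_simp
      have hb2 := hbound (i+1) (by omega)
      have Ed : A * (h (i+1+1) - h (i+1)) = B * (h (i+1) - h i) + G * h (i+1) := by
        linear_combination -E
      have hd : h (i+1+1) - h (i+1) = (B * (h (i+1) - h i) + G * h (i+1)) / A := by
        rw [eq_div_iff hApos.ne']; linear_combination Ed
      have ih2' : (h (i+1) - h i) * ((n:ℝ)*(r-1)) ≤ 1 := by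
        have := (le_div_iff₀ hD).mp ih2
        linarith
      constructor
      · rw [hd]
        exact div_nonneg (add_nonneg (mul_nonneg hBpos.le ih1) (mul_nonneg hGnn hb2.1)) hApos.le
      · rw [hd, div_le_div_iff₀ hApos hD]
        have s1 : B * ((h (i+1) - h i) * ((n:ℝ)*(r-1))) ≤ B * 1 :=
          mul_le_mul_of_nonneg_left ih2' hBpos.le
        have s2 : G * ((n:ℝ)*(r-1)) * h (i+1) ≤ G * ((n:ℝ)*(r-1)) * 1 :=
          mul_le_mul_of_nonneg_left hb2.2 (mul_nonneg hGnn hD.le)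
        have s3 : B + G * ((n:ℝ)*(r-1)) ≤ A := by
          rw [hAB]
          nlinarith [mul_nonneg hGnn hn0.le, mul_nonneg (show (0:ℝ) ≤ r - 1 by linarith) hBpos.le]
        nlinarith [s1, s2, s3]
  obtain ⟨hk0, hkU⟩ := key k le_rfl
  rw [htop] at hk0 hkU
  have hhk0 := (hbound k (by omega)).1
  by_cases hx : 1 ≤ (n:ℝ) * (r - 1)
  · have h12 : 1 / ((n:ℝ)*(r-1)) ≤ 2 / ((n:ℝ)*(r-1) + 1) := by
      rw [div_le_div_iff₀ hD (by linarith)]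
      nlinarith
    linarith
  · push_neg at hx
    have : (1:ℝ) ≤ 2 / ((n:ℝ)*(r-1) + 1) := by
      rw [le_div_iff₀ (by linarith)]
      linarith
    linarith
end

section
/- Under the hypotheses of the context (the absorption probabilities h_0,…,h_{k+1} of the Markov chain M_k^1), it holds that h_0 ≥ 1 − (k+2)/(n(r−1)). -/
/-!
Write `d i = h (i+1) - h i` and `c = 1 / (n (r - 1))`. Clearing the denominator in the recurrence,
and using `α_i = r (β_i + n γ_i)`, gives the balance equation
`r (β_i + n γ_i) d i = β_i d (i-1) + γ_i h i`, and the boundary condition at `0` is the same equation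
with `β = 0`, `γ = 1`. Since `0 ≤ h i ≤ 1`, induction on `i` keeps every increment in `[0, c]`,
so telescoping gives `1 - h 0 = h (k+1) - h 0 ≤ (k+1) c`.
-/

open Set

theorem sub_le_nsmul_of_forall_succ_sub_le {α : Type*} [AddCommGroup α] [PartialOrder α]
    [IsOrderedAddMonoid α] {f : ℕ → α} {c : α} {m : ℕ} (hf : ∀ i < m, f (i + 1) - f i ≤ c) :
    f m - f 0 ≤ m • c :=
  calc f m - f 0 = ∑ i ∈ Finset.range m, (f (i + 1) - f i) := (Finset.sum_range_sub f m).symm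
    _ ≤ m • c := by
      simpa using Finset.sum_le_card_nsmul _ _ c fun i hi => hf i (Finset.mem_range.mp hi)

theorem mul_sub_eq_of_eq_div {α β γ w y z : ℝ} (hden : α + β + γ ≠ 0)
    (hy : y = (α * z + β * w) / (α + β + γ)) : α * (z - y) = β * (y - w) + γ * y := by
  rw [eq_div_iff hden] at hy
  linarith

theorem increment_mem_Icc_of_balance {r n β γ x d d' : ℝ} (hr : 1 < r) (hn : 0 < n)
    (hβ : 0 ≤ β) (hγ : 0 ≤ γ) (hrate : 0 < β + n * γ) (hx : x ∈ Icc 0 1)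
    (hd : d ∈ Icc 0 (n * (r - 1))⁻¹) (hbal : r * (β + n * γ) * d' = β * d + γ * x) :
    d' ∈ Icc 0 (n * (r - 1))⁻¹ := by
  set c := (n * (r - 1))⁻¹
  have hα : 0 < r * (β + n * γ) := by positivity
  have hc : n * (r - 1) * c = 1 := mul_inv_cancel₀ (by nlinarith)
  have hc0 : 0 ≤ c := by positivity
  constructor
  · refine nonneg_of_mul_nonneg_right ?_ hα
    rw [hbal]
    exact add_nonneg (mul_nonneg hβ hd.1) (mul_nonneg hγ hx.1)
  · refine le_of_mul_le_mul_left ?_ hα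
    -- `r (β + n γ) c - (β c + γ) = (r - 1) β c + n γ c`, because `n (r - 1) c = 1`.
    calc r * (β + n * γ) * d' = β * d + γ * x := hbal
      _ ≤ β * c + γ := by
        gcongr
        · exact hd.2
        · exact mul_le_of_le_one_right hγ hx.2
      _ ≤ r * (β + n * γ) * c := by
        nlinarith [mul_nonneg (mul_nonneg hβ hc0) (sub_nonneg.2 hr.le), mul_nonneg hγ hc0]

theorem increment_mem_Icc_of_recurrence {r n k i w x z : ℝ} (hr : 1 < r) (hn : 0 < n)
    (hi : 0 < i) (hin : i < n) (hik : i ≤ k) (hx : x ∈ Icc 0 1)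
    (hd : x - w ∈ Icc 0 (n * (r - 1))⁻¹)
    (hrec : x = (r * ((k - i) * n + i * (n - i)) / n * z + (i * (n - i) / n) * w)
        / (r * ((k - i) * n + i * (n - i)) / n + i * (n - i) / n + (k - i) / n)) :
    z - x ∈ Icc 0 (n * (r - 1))⁻¹ := by
  have hβ : 0 < i * (n - i) / n := div_pos (mul_pos hi (sub_pos.2 hin)) hn
  have hγ : 0 ≤ (k - i) / n := div_nonneg (sub_nonneg.2 hik) hn.le
  have hα : r * ((k - i) * n + i * (n - i)) / n = r * (i * (n - i) / n + n * ((k - i) / n)) := by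
    field_simp
    ring
  refine increment_mem_Icc_of_balance hr hn hβ.le hγ (by positivity) hx hd ?_
  rw [← hα]
  refine mul_sub_eq_of_eq_div ?_ hrec
  rw [hα]
  positivity

theorem h0_lower_bound_general (n k : ℕ) (hn : 1 ≤ n) (hk2 : k ≤ n - 1)
    (r : ℝ) (hr : 1 < r) (h : ℕ → ℝ)
    (hbound : ∀ i ≤ k + 1, 0 ≤ h i ∧ h i ≤ 1)
    (htop : h (k + 1) = 1)
    (hzero : h 0 = (r * n / (r * n + 1)) * h 1)
    (hrec : ∀ i, 1 ≤ i → i ≤ k →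
      h i = (r * (((k : ℝ) - i) * n + i * ((n : ℝ) - i)) / n * h (i + 1)
              + ((i : ℝ) * ((n : ℝ) - i) / n) * h (i - 1))
        / (r * (((k : ℝ) - i) * n + i * ((n : ℝ) - i)) / n
              + (i : ℝ) * ((n : ℝ) - i) / n + ((k : ℝ) - i) / n)) :
    h 0 ≥ 1 - ((k : ℝ) + 2) / ((n : ℝ) * (r - 1)) := by
  have hn' : (0 : ℝ) < n := by exact_mod_cast hn
  have hc : (0 : ℝ) ≤ (n * (r - 1))⁻¹ := by have := sub_pos.2 hr; positivity
  have hinc : ∀ j ≤ k, h (j + 1) - h j ∈ Icc 0 (n * (r - 1))⁻¹ := by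
    intro j hj
    induction j with
    | zero =>
      refine increment_mem_Icc_of_balance (β := 0) (γ := 1) (d := 0) hr hn' le_rfl zero_le_one
        (by simpa using hn') (hbound 0 (by omega)) ⟨le_rfl, hc⟩ ?_
      rw [hzero]
      field_simp
      ring
    | succ j ih =>
      refine increment_mem_Icc_of_recurrence (i := (j + 1 : ℕ)) (k := k) hr hn' (by positivity)
        (by exact_mod_cast (show j + 1 < n by omega)) (by exact_mod_cast hj)
        (hbound (j + 1) (by omega)) (ih (by omega)) ?_
      simpa using hrec (j + 1) (by omega) hj
  have htel : 1 - h 0 ≤ ((k : ℝ) + 1) * (n * (r - 1))⁻¹ := by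
    simpa [htop] using sub_le_nsmul_of_forall_succ_sub_le fun i (hi : i < k + 1) =>
      (hinc i (by omega)).2
  have hslack : ((k : ℝ) + 1) * (n * (r - 1))⁻¹ ≤ ((k : ℝ) + 2) * (n * (r - 1))⁻¹ := by
    gcongr
    linarith
  rw [ge_iff_le, div_eq_mul_inv]
  linarith

/-- Lower bound `h_0 ≥ 1 - (k+2)/(n(r-1))` for the absorption probabilities of the
Markov chain `M_k^1`. -/
theorem h0_lower_bound (n k : ℕ) (hn : 1 ≤ n) (hk1 : 1 ≤ k) (hk2 : k ≤ n - 1)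
    (r : ℝ) (hr : 1 < r) (h : ℕ → ℝ)
    (hbound : ∀ i ≤ k + 1, 0 ≤ h i ∧ h i ≤ 1)
    (htop : h (k + 1) = 1)
    (hzero : h 0 = (r * n / (r * n + 1)) * h 1)
    (hrec : ∀ i, 1 ≤ i → i ≤ k →
      h i = (r * (((k : ℝ) - i) * n + i * ((n : ℝ) - i)) / n * h (i + 1)
              + ((i : ℝ) * ((n : ℝ) - i) / n) * h (i - 1))
        / (r * (((k : ℝ) - i) * n + i * ((n : ℝ) - i)) / n
              + (i : ℝ) * ((n : ℝ) - i) / n + ((k : ℝ) - i) / n)) :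
    h 0 ≥ 1 - ((k : ℝ) + 2) / ((n : ℝ) * (r - 1)) :=
  h0_lower_bound_general n k hn hk2 r hr h hbound htop hzero hrec
end

section
/- Under the hypotheses of the context (the absorption probabilities s_k,…,s_n of the Markov chain M_k^2), it holds that s_k ≥ 1 − (64r/((r−5)(r−1)))·(n/(n−k)²). -/
/-!
Write `Δ_i = s_i - s_{i-1}` and `W = n - k`. Clearing the denominator of the recurrence gives the
balance law `α_i Δ_{i+1} + γ_i (1 - s_i) = β_i Δ_i`. While `i - k ≤ n - i` one has
`β_i ≤ (3/r) α_i`, so the increments decay geometrically, `Δ_{k+1+m} ≤ (3/r)^m Δ_{k+1}`. Summing up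
to the midpoint `i* ≈ (n + k)/2` gives `s_{i*} - s_k ≤ r/(r-3) · Δ_{k+1}`, and the balance law at
`i*` gives `1 - s_{i*} ≤ (β/γ)_{i*} Δ_{i*} ≤ 3n²/(2rW) · (3/r)^{W/2} Δ_{k+1}`, where
`(3/r)^{W/2} ≤ 3/W` by Bernoulli. Finally `Δ_{k+1} ≤ 2/(n(r-1))` by the hypothesis on `s_k`.
-/

lemma balance_of_eq_weighted_average {K : Type*} [Field K] {a b c x y z : K}
    (h : a + b + c ≠ 0) (hz : z = (a * x + b * y + c) / (a + b + c)) :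
    a * (x - z) + c * (1 - z) = b * (z - y) := by
  rw [eq_div_iff h] at hz
  linear_combination -hz

lemma three_fifths_pow_le (m : ℕ) : (3 / 5 : ℝ) ^ m ≤ 3 / (2 * m + 3) := by
  have bernoulli : 1 + m * (2 / 3 : ℝ) ≤ (5 / 3) ^ m := by
    simpa [show (1 : ℝ) + 2 / 3 = 5 / 3 by norm_num] using
      one_add_mul_le_pow (by norm_num : (-2 : ℝ) ≤ 2 / 3) m
  rw [show (3 / 5 : ℝ) ^ m = 1 / (5 / 3) ^ m by rw [div_pow, div_pow]; field_simp,
    div_le_div_iff₀ (by positivity) (by positivity)]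
  linarith

lemma three_div_pow_le_three_div {r w : ℝ} {M : ℕ} (hr : 5 ≤ r) (hw : 0 < w) (hwM : w ≤ 2 * M + 2) :
    (3 / r) ^ M ≤ 3 / w := calc
  (3 / r) ^ M ≤ (3 / 5) ^ M := by gcongr
  _ ≤ 3 / (2 * M + 3) := three_fifths_pow_le M
  _ ≤ 3 / w := div_le_div_of_nonneg_left zero_le_three hw (by linarith)

lemma error_bound_le {r x w : ℝ} (hr : 5 < r) (hw : 0 < w) (hwx : w ≤ x) :
    (r / (r - 3) + 3 * x ^ 2 / (2 * r * w) * (3 / w)) * (2 / (x * (r - 1)))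
      ≤ 64 * r / ((r - 5) * (r - 1)) * (x / w ^ 2) := by
  have hx : 0 < x := hw.trans_le hwx
  have h3 : 0 < r - 3 := by linarith
  have h5 : 0 < r - 5 := by linarith
  have h1 : 0 < r - 1 := by linarith
  field_simp
  have hwx2 : w ^ 2 ≤ x ^ 2 := by gcongr
  nlinarith [mul_le_mul_of_nonneg_left hwx2 (by positivity : (0 : ℝ) ≤ 2 * r ^ 2 * (r - 5)),
    mul_pos (mul_pos h3 h5) (pow_pos hx 2), mul_pos (mul_pos h3 h3) (pow_pos hx 2),
    mul_pos (pow_pos hx 2) (mul_pos h3 (mul_pos h5 h5))]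

namespace UrchinChain

variable (n k : ℕ) (r : ℝ)

noncomputable def α (i : ℕ) : ℝ := r * i * ((n : ℝ) - i) / n

noncomputable def β (i : ℕ) : ℝ := (((i : ℝ) - k) * n + i * ((n : ℝ) - i)) / n

noncomputable def γ (i : ℕ) : ℝ := r * ((i : ℝ) - k) / n

-- A `γ`-move is an immediate success, hence the constant `γ_i` in the numerator.
def IsHarmonic (s : ℕ → ℝ) : Prop :=
  ∀ i, k + 1 ≤ i → i ≤ n →
    s i = (α n r i * s (i + 1) + β n k i * s (i - 1) + γ n k r i) / (α n r i + β n k i + γ n k r i)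

variable {n k r} {i : ℕ}

lemma α_nonneg (hr : 0 ≤ r) (hin : i ≤ n) : 0 ≤ α n r i := by
  have : (i : ℝ) ≤ n := by exact_mod_cast hin
  unfold α
  have := sub_nonneg.2 this
  positivity

lemma α_pos (hr : 0 < r) (hi : 0 < i) (hin : i < n) : 0 < α n r i := by
  have hin' : (i : ℝ) < n := by exact_mod_cast hin
  have hi' : (0 : ℝ) < i := by exact_mod_cast hi
  unfold α
  exact div_pos (mul_pos (mul_pos hr hi') (sub_pos.2 hin')) (hi'.trans hin')

lemma β_pos (hki : k < i) (hin : i ≤ n) : 0 < β n k i := by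
  have hki' : (k : ℝ) < i := by exact_mod_cast hki
  have hin' : (i : ℝ) ≤ n := by exact_mod_cast hin
  unfold β
  apply div_pos _ (by linarith)
  nlinarith

lemma γ_pos (hr : 0 < r) (hki : k < i) (hin : i ≤ n) : 0 < γ n k r i := by
  have hki' : (k : ℝ) < i := by exact_mod_cast hki
  have hin' : (i : ℝ) ≤ n := by exact_mod_cast hin
  unfold γ
  apply div_pos (mul_pos hr (by linarith)) (by linarith)

lemma β_le_three_div_mul_α (hr : 0 < r) (hki : k < i) (hi : 2 * i ≤ n + k) :
    β n k i ≤ 3 / r * α n r i := by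
  have hki' : (k : ℝ) < i := by exact_mod_cast hki
  have hi' : 2 * (i : ℝ) ≤ n + k := by exact_mod_cast hi
  rw [show 3 / r * α n r i = 3 * i * ((n : ℝ) - i) / n by unfold α; field_simp]
  unfold β
  gcongr
  nlinarith

lemma β_le_mul_γ (hr : 0 < r) (hki : k < i) (hin : i ≤ n) (hmid : (n : ℝ) - k ≤ 2 * (i - k)) :
    β n k i ≤ 3 * n ^ 2 / (2 * r * (n - k)) * γ n k r i := by
  have hki' : (k : ℝ) < i := by exact_mod_cast hki
  have hin' : (i : ℝ) ≤ n := by exact_mod_cast hin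
  have hW : (0 : ℝ) < n - k := by linarith
  rw [show 3 * n ^ 2 / (2 * r * (n - k)) * γ n k r i = 3 * n * (i - k) / (2 * (n - k)) by
    unfold γ; field_simp]
  unfold β
  rw [div_le_div_iff₀ (by linarith) (by linarith)]
  have hquarter : (i : ℝ) * (n - i) ≤ n ^ 2 / 4 := by nlinarith [sq_nonneg ((n : ℝ) - 2 * i)]
  have hWn : (n : ℝ) - k ≤ n := by linarith [(k.cast_nonneg : (0 : ℝ) ≤ k)]
  nlinarith [mul_le_mul_of_nonneg_left hquarter (by linarith : (0 : ℝ) ≤ 2 * (n - k)),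
    mul_le_mul_of_nonneg_right hWn (by nlinarith : (0 : ℝ) ≤ 2 * (i - k) * n),
    mul_le_mul_of_nonneg_right hmid (by positivity : (0 : ℝ) ≤ n ^ 2 / 2)]

variable {s : ℕ → ℝ}

lemma IsHarmonic.balance (hs : IsHarmonic n k r s) (hr : 0 < r) {m : ℕ} (hm : k + m + 1 ≤ n) :
    α n r (k + m + 1) * (s (k + m + 2) - s (k + m + 1))
        + γ n k r (k + m + 1) * (1 - s (k + m + 1))
      = β n k (k + m + 1) * (s (k + m + 1) - s (k + m)) := by
  have hki : k < k + m + 1 := by omega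
  refine balance_of_eq_weighted_average (ne_of_gt ?_) (hs _ (by omega) hm)
  linarith [α_nonneg hr.le hm, β_pos hki hm, γ_pos hr hki hm]

lemma IsHarmonic.increment_le (hs : IsHarmonic n k r s) (hr : 0 < r) {m : ℕ}
    (hm : k + 2 * m + 2 ≤ n) (hle : s (k + m + 1) ≤ 1) (hinc : s (k + m) ≤ s (k + m + 1)) :
    s (k + m + 2) - s (k + m + 1) ≤ 3 / r * (s (k + m + 1) - s (k + m)) := by
  have hα := α_pos (n := n) hr (i := k + m + 1) (by omega) (by omega)
  have hβ := β_le_three_div_mul_α (n := n) (k := k) hr (i := k + m + 1) (by omega) (by omega)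
  have hγ := γ_pos (n := n) (k := k) hr (i := k + m + 1) (by omega) (by omega)
  have hbal := hs.balance hr (by omega : k + m + 1 ≤ n)
  refine le_of_mul_le_mul_left ?_ hα
  calc α n r (k + m + 1) * (s (k + m + 2) - s (k + m + 1))
      ≤ β n k (k + m + 1) * (s (k + m + 1) - s (k + m)) := by
        linarith [mul_nonneg hγ.le (sub_nonneg.2 hle)]
    _ ≤ 3 / r * α n r (k + m + 1) * (s (k + m + 1) - s (k + m)) := by gcongr
    _ = α n r (k + m + 1) * (3 / r * (s (k + m + 1) - s (k + m))) := by ring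

section monotone

variable (hs : IsHarmonic n k r s) (hr : 0 < r)
  (hle : ∀ i, k ≤ i → i ≤ n → s i ≤ 1) (hmono : ∀ i, k ≤ i → i ≤ n → s i ≤ s (i + 1))
include hs hr hle hmono

lemma IsHarmonic.increment_le_geom {M : ℕ} (hM : k + 2 * M ≤ n) {m : ℕ} (hm : m ≤ M) :
    s (k + m + 1) - s (k + m) ≤ (3 / r) ^ m * (s (k + 1) - s k) := by
  refine le_geom (u := fun j ↦ s (k + j + 1) - s (k + j)) (by positivity) m fun j hj ↦ ?_
  simpa only [← add_assoc] using
    hs.increment_le hr (by omega) (hle _ (by omega) (by omega)) (hmono _ (by omega) (by omega))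

lemma IsHarmonic.sub_le_div_mul_increment (hr3 : 3 < r) {M : ℕ} (hM : k + 2 * M ≤ n) :
    s (k + M + 1) - s k ≤ r / (r - 3) * (s (k + 1) - s k) := by
  have hq : 3 / r < 1 := (div_lt_one hr).2 hr3
  have hΔ : 0 ≤ s (k + 1) - s k := sub_nonneg.2 (hmono k le_rfl (by omega))
  calc s (k + M + 1) - s k = ∑ m ∈ Finset.range (M + 1), (s (k + m + 1) - s (k + m)) := by
        simpa only [add_assoc, add_zero] using
          (Finset.sum_range_sub (fun m ↦ s (k + m)) (M + 1)).symm
    _ ≤ ∑ m ∈ Finset.range (M + 1), (3 / r) ^ m * (s (k + 1) - s k) :=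
        Finset.sum_le_sum fun m hm ↦
          hs.increment_le_geom hr hle hmono hM (Finset.mem_range_succ_iff.1 hm)
    _ = (∑ m ∈ Finset.range (M + 1), (3 / r) ^ m) * (s (k + 1) - s k) := (Finset.sum_mul ..).symm
    _ ≤ (1 - 3 / r)⁻¹ * (s (k + 1) - s k) :=
        mul_le_mul_of_nonneg_right (by
          simpa [← Finset.range_eq_Ico] using geom_sum_Ico_le_of_lt_one (m := 0) (n := M + 1)
            (by positivity : 0 ≤ 3 / r) hq) hΔ
    _ = r / (r - 3) * (s (k + 1) - s k) := by field_simp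

end monotone

lemma IsHarmonic.one_sub_le (hs : IsHarmonic n k r s) (hr : 0 < r) {M : ℕ} (hM : k + M + 1 ≤ n)
    (hmid : (n : ℝ) - k ≤ 2 * (M + 1)) (hinc : s (k + M) ≤ s (k + M + 1))
    (hinc' : s (k + M + 1) ≤ s (k + M + 2)) :
    1 - s (k + M + 1) ≤ 3 * n ^ 2 / (2 * r * (n - k)) * (s (k + M + 1) - s (k + M)) := by
  have hα := α_nonneg (n := n) hr.le hM
  have hβ := β_le_mul_γ (n := n) (k := k) (i := k + M + 1) hr (by omega) hM (by push_cast; linarith)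
  have hγ := γ_pos (n := n) (k := k) (i := k + M + 1) hr (by omega) hM
  have hbal := hs.balance hr hM
  refine le_of_mul_le_mul_left ?_ hγ
  calc γ n k r (k + M + 1) * (1 - s (k + M + 1))
      ≤ β n k (k + M + 1) * (s (k + M + 1) - s (k + M)) := by
        linarith [mul_nonneg hα (sub_nonneg.2 hinc')]
    _ ≤ 3 * n ^ 2 / (2 * r * (n - k)) * γ n k r (k + M + 1) * (s (k + M + 1) - s (k + M)) := by
        gcongr
    _ = γ n k r (k + M + 1) * (3 * n ^ 2 / (2 * r * (n - k)) * (s (k + M + 1) - s (k + M))) := by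
        ring

lemma IsHarmonic.one_sub_le_mul_increment (hs : IsHarmonic n k r s) (hr : 5 < r) (hkn : k < n)
    (hle : ∀ i, k ≤ i → i ≤ n → s i ≤ 1) (hmono : ∀ i, k ≤ i → i ≤ n → s i ≤ s (i + 1)) :
    1 - s k ≤
      (r / (r - 3) + 3 * n ^ 2 / (2 * r * (n - k)) * (3 / (n - k))) * (s (k + 1) - s k) := by
  have hr0 : 0 < r := by linarith
  -- `k + M + 1` is the midpoint of `[k, n]`
  obtain ⟨M, hM⟩ : ∃ M, M = (n - k - 1) / 2 := ⟨_, rfl⟩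
  have hW : (0 : ℝ) < n - k := sub_pos.2 (by exact_mod_cast hkn)
  have hWM : (n : ℝ) - k ≤ 2 * M + 2 := by
    rw [sub_le_iff_le_add]; exact_mod_cast (by omega : n ≤ 2 * M + 2 + k)
  have hΔ0 : 0 ≤ s (k + 1) - s k := sub_nonneg.2 (hmono k le_rfl hkn.le)
  have hQ : 0 ≤ 3 * (n : ℝ) ^ 2 / (2 * r * (n - k)) := by positivity
  have hlower := hs.sub_le_div_mul_increment hr0 hle hmono (by linarith) (M := M) (by omega)
  have hupper := hs.one_sub_le hr0 (M := M) (by omega) (by linarith)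
    (hmono _ (by omega) (by omega)) (hmono _ (by omega) (by omega))
  have hdecay := (hs.increment_le_geom hr0 hle hmono (M := M) (by omega) le_rfl).trans
    (mul_le_mul_of_nonneg_right (three_div_pow_le_three_div hr.le hW hWM) hΔ0)
  nlinarith [mul_le_mul_of_nonneg_left hdecay hQ]

end UrchinChain

theorem sk_lower_bound_general (n k : ℕ) (hn : 2 ≤ n) (hk2 : k ≤ n - 1)
    (r : ℝ) (hr : 5 < r) (s : ℕ → ℝ)
    (hbound : ∀ i, k ≤ i → i ≤ n + 1 → 0 ≤ s i ∧ s i ≤ 1)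
    (htop : s (n + 1) = 1)
    (hmono : ∀ i, k ≤ i → i < n → s i ≤ s (i + 1))
    (hfirst : s k ≥ (1 - 2 / ((n : ℝ) * (r - 1))) * s (k + 1))
    (hrec : ∀ i, k + 1 ≤ i → i ≤ n →
      s i = (r * i * ((n : ℝ) - i) / n * s (i + 1)
              + ((((i : ℝ) - k) * n + i * ((n : ℝ) - i)) / n) * s (i - 1)
              + r * ((i : ℝ) - k) / n)
        / (r * i * ((n : ℝ) - i) / n
              + (((i : ℝ) - k) * n + i * ((n : ℝ) - i)) / n
              + r * ((i : ℝ) - k) / n)) :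
    s k ≥ 1 - (64 * r / ((r - 5) * (r - 1))) * ((n : ℝ) / ((n : ℝ) - k) ^ 2) := by
  have hkn : k < n := by omega
  have hs : UrchinChain.IsHarmonic n k r s := hrec
  have hle : ∀ i, k ≤ i → i ≤ n → s i ≤ 1 := fun i hki hin ↦ (hbound i hki (by omega)).2
  have hmono' : ∀ i, k ≤ i → i ≤ n → s i ≤ s (i + 1) := by
    intro i hki hin
    rcases hin.lt_or_eq with hin | rfl
    · exact hmono i hki hin
    · exact htop ▸ hle i hki le_rfl
  have hε : 0 ≤ 2 / ((n : ℝ) * (r - 1)) :=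
    div_nonneg zero_le_two (mul_nonneg n.cast_nonneg (by linarith))
  have hΔ : s (k + 1) - s k ≤ 2 / (n * (r - 1)) := by nlinarith [hle (k + 1) (by omega) hkn]
  have hW : (0 : ℝ) < n - k := sub_pos.2 (by exact_mod_cast hkn)
  have hC : 0 ≤ r / (r - 3) + 3 * (n : ℝ) ^ 2 / (2 * r * (n - k)) * (3 / (n - k)) := by
    have : 0 < r - 3 := by linarith
    have : 0 < r := by linarith
    positivity
  calc s k ≥ 1 - (r / (r - 3) + 3 * (n : ℝ) ^ 2 / (2 * r * (n - k)) * (3 / (n - k)))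
        * (s (k + 1) - s k) := by linarith [hs.one_sub_le_mul_increment hr hkn hle hmono']
    _ ≥ 1 - (r / (r - 3) + 3 * (n : ℝ) ^ 2 / (2 * r * (n - k)) * (3 / (n - k)))
        * (2 / (n * (r - 1))) := by gcongr
    _ ≥ 1 - (64 * r / ((r - 5) * (r - 1))) * ((n : ℝ) / ((n : ℝ) - k) ^ 2) :=
      sub_le_sub_left (error_bound_le hr hW (sub_le_self _ k.cast_nonneg)) 1

/-- Lower bound `s_k ≥ 1 - (64r/((r-5)(r-1)))·(n/(n-k)²)` for the absorption
probabilities of the Markov chain `M_k^2`. -/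
theorem sk_lower_bound (n k : ℕ) (hn : 2 ≤ n) (hk1 : 1 ≤ k) (hk2 : k ≤ n - 1)
    (r : ℝ) (hr : 5 < r) (s : ℕ → ℝ)
    (hbound : ∀ i, k ≤ i → i ≤ n + 1 → 0 ≤ s i ∧ s i ≤ 1)
    (htop : s (n + 1) = 1)
    (hmono : ∀ i, k ≤ i → i < n → s i ≤ s (i + 1))
    (hfirst : s k ≥ (1 - 2 / ((n : ℝ) * (r - 1))) * s (k + 1))
    (hrec : ∀ i, k + 1 ≤ i → i ≤ n →
      s i = (r * i * ((n : ℝ) - i) / n * s (i + 1)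
              + ((((i : ℝ) - k) * n + i * ((n : ℝ) - i)) / n) * s (i - 1)
              + r * ((i : ℝ) - k) / n)
        / (r * i * ((n : ℝ) - i) / n
              + (((i : ℝ) - k) * n + i * ((n : ℝ) - i)) / n
              + r * ((i : ℝ) - k) / n)) :
    s k ≥ 1 - (64 * r / ((r - 5) * (r - 1))) * ((n : ℝ) / ((n : ℝ) - k) ^ 2) :=
  sk_lower_bound_general n k hn hk2 r hr s hbound htop hmono hfirst hrec
end

section
/- Under the hypotheses of the context (the absorption probabilities s_k,…,s_n of the Markov chain M_k^2), if in addition n ≥ 3 and k ≤ n − √(n·log n) (log denoting the natural logarithm), then s_k ≥ 1 − 64r/((r−5)(r−1)·log n). -/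
/-!
Write `d_i = s (i + 1) - s i`. The recurrence for `s_i` is equivalent to
`β_i d_{i-1} = α_i d_i + γ_i (1 - s_i)`. On the left half `2 i ≤ n + k` one has
`r β_i ≤ 5 α_i`, so, `s` being increasing, the increments decay geometrically with ratio
`q = 5/r` from `d_k ≤ ε = 2/(n(r-1))`, and `s_m - s_k ≤ ε/(1-q)` at the midpoint `m = k + M`,
`M ≈ (n-k)/2`. At `m` the `γ`-term gives `1 - s_m ≤ (3n/r) d_{m-1} ≤ (3n/r) q^(M-1) ε`,
and `M q^(M-1) ≤ 1/(1-q)`. Since `3 M ≥ n - k ≥ √(n log n) ≥ log n`, both contributions are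
`O(r / ((r-5)(r-1) log n))`.
-/

open Finset

theorem mul_sub_eq_of_eq_weighted_mean {K : Type*} [Field K] {a b c x y z : K}
    (h : a + b + c ≠ 0) (hx : x = (a * y + b * z + c) / (a + b + c)) :
    b * (x - z) = a * (y - x) + c * (1 - x) := by
  rw [eq_div_iff h] at hx
  linear_combination hx

theorem succ_mul_pow_le_geom_sum {K : Type*} [Field K] [LinearOrder K] [IsStrictOrderedRing K]
    {q : K} (hq0 : 0 ≤ q) (hq1 : q ≤ 1) (j : ℕ) :
    (j + 1) * q ^ j ≤ ∑ i ∈ range (j + 1), q ^ i := by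
  have h := card_nsmul_le_sum (range (j + 1)) (q ^ ·) (q ^ j) fun i hi =>
    pow_le_pow_of_le_one hq0 hq1 (Nat.lt_succ_iff.mp (mem_range.mp hi))
  simpa using h

theorem sub_mul_le_four_mul_mul_sub {i k n : ℝ} (hk : 0 ≤ k) (hki : k ≤ i)
    (hikn : 2 * i ≤ n + k) : (i - k) * n ≤ 4 * i * (n - i) := by
  nlinarith

open Real in
theorem one_le_log_of_three_le {x : ℝ} (hx : 3 ≤ x) : 1 ≤ log x :=
  (le_log_iff_exp_le (by linarith)).mpr (exp_one_lt_three.le.trans hx)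

open Real in
theorem log_le_sqrt_mul_log {x : ℝ} (hx : 1 ≤ x) : log x ≤ √(x * log x) := by
  have h0 : 0 ≤ log x := log_nonneg hx
  have h1 : log x ≤ x := by linarith [log_le_sub_one_of_pos (by linarith : 0 < x)]
  rw [le_sqrt h0 (by positivity), sq]
  exact mul_le_mul_of_nonneg_right h1 h0

theorem exists_succ_le_of_le_sub {n k : ℕ} {L : ℝ} (hL : L ≤ n - k)
    (hgap : 1 < (n : ℝ) - k) :
    ∃ j : ℕ, k + 2 * (j + 1) ≤ n ∧ n ≤ k + 3 * (j + 1) ∧ L ≤ 3 * (j + 1) := by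
  have hkn : k + 1 < n := by
    have : (k : ℝ) + 1 < n := by linarith
    exact_mod_cast this
  refine ⟨(n - k) / 2 - 1, by omega, by omega, ?_⟩
  have : (n : ℝ) ≤ k + 3 * (((n - k) / 2 - 1 : ℕ) + 1) := by
    exact_mod_cast (by omega : n ≤ k + 3 * ((n - k) / 2 - 1 + 1))
  linarith

namespace Urchin

noncomputable section

def alpha (n : ℕ) (r : ℝ) (i : ℕ) : ℝ := r * i * ((n : ℝ) - i) / n

def beta (n k i : ℕ) : ℝ := (((i : ℝ) - k) * n + i * ((n : ℝ) - i)) / n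

def gamma (n k : ℕ) (r : ℝ) (i : ℕ) : ℝ := r * ((i : ℝ) - k) / n

def FirstStep (n k : ℕ) (r : ℝ) (s : ℕ → ℝ) (i : ℕ) : Prop :=
  s i = (alpha n r i * s (i + 1) + beta n k i * s (i - 1) + gamma n k r i)
    / (alpha n r i + beta n k i + gamma n k r i)

end

variable {n k i : ℕ} {r : ℝ} {s : ℕ → ℝ}

theorem alpha_nonneg (hr : 0 ≤ r) (hin : i ≤ n) : 0 ≤ alpha n r i := by
  have : (i : ℝ) ≤ n := by exact_mod_cast hin
  unfold alpha
  exact div_nonneg (mul_nonneg (by positivity) (by linarith)) (Nat.cast_nonneg n)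

theorem alpha_pos (hr : 0 < r) (hki : k < i) (hin : i < n) : 0 < alpha n r i := by
  have hi : (0 : ℝ) < i := by exact_mod_cast hki.trans_le' (Nat.zero_le k)
  have : (i : ℝ) < n := by exact_mod_cast hin
  unfold alpha
  exact div_pos (mul_pos (mul_pos hr hi) (by linarith)) (by linarith)

theorem beta_nonneg (hki : k ≤ i) (hin : i ≤ n) : 0 ≤ beta n k i := by
  have : (k : ℝ) ≤ i := by exact_mod_cast hki
  have : (i : ℝ) ≤ n := by exact_mod_cast hin
  unfold beta
  refine div_nonneg (add_nonneg ?_ ?_) (Nat.cast_nonneg n)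
  · exact mul_nonneg (by linarith) (by positivity)
  · exact mul_nonneg (by positivity) (by linarith)

theorem gamma_pos (hr : 0 < r) (hki : k < i) (hin : i ≤ n) : 0 < gamma n k r i := by
  have : (k : ℝ) < i := by exact_mod_cast hki
  have : (i : ℝ) ≤ n := by exact_mod_cast hin
  unfold gamma
  exact div_pos (mul_pos hr (by linarith)) (by linarith [(Nat.cast_nonneg k : (0 : ℝ) ≤ k)])

theorem r_mul_beta_le (hr : 0 < r) (hki : k < i) (hikn : 2 * i ≤ n + k) :
    r * beta n k i ≤ 5 * alpha n r i := by
  have hki' : (k : ℝ) ≤ i := by exact_mod_cast hki.le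
  have hikn' : 2 * (i : ℝ) ≤ n + k := by exact_mod_cast hikn
  have h4 := sub_mul_le_four_mul_mul_sub (Nat.cast_nonneg k) hki' hikn'
  unfold alpha beta
  rw [← mul_div_assoc, ← mul_div_assoc]
  apply div_le_div_of_nonneg_right _ (Nat.cast_nonneg n)
  have := mul_le_mul_of_nonneg_left
    (show ((i : ℝ) - k) * n + i * (n - i) ≤ 5 * (i * (n - i)) by linarith) hr.le
  linarith

theorem FirstStep.beta_mul_sub (hs : FirstStep n k r s i) (hr : 0 < r) (hki : k < i)
    (hin : i ≤ n) :
    beta n k i * (s i - s (i - 1)) =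
      alpha n r i * (s (i + 1) - s i) + gamma n k r i * (1 - s i) := by
  have hpos := add_pos_of_nonneg_of_pos
    (add_nonneg (alpha_nonneg hr.le hin) (beta_nonneg hki.le hin)) (gamma_pos hr hki hin)
  exact mul_sub_eq_of_eq_weighted_mean hpos.ne' hs

theorem FirstStep.sub_le_mul_sub (hs : FirstStep n k r s i) (hr : 0 < r) (hki : k < i)
    (hikn : 2 * i ≤ n + k) (hs1 : s i ≤ 1) (hmono : s (i - 1) ≤ s i) :
    s (i + 1) - s i ≤ 5 / r * (s i - s (i - 1)) := by
  have hin : i < n := by omega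
  have hα := alpha_pos hr hki hin
  have hβ := r_mul_beta_le hr hki hikn
  have hstep : alpha n r i * (s (i + 1) - s i) ≤ beta n k i * (s i - s (i - 1)) := by
    rw [hs.beta_mul_sub hr hki hin.le]
    nlinarith [gamma_pos hr hki hin.le]
  rw [div_mul_eq_mul_div, le_div_iff₀ hr]
  refine le_of_mul_le_mul_left ?_ hα
  nlinarith

theorem FirstStep.one_sub_le (hs : FirstStep n k r s i) (hr : 0 < r) (hki : k < i)
    (hin : i < n) (hn : n + 2 * k ≤ 3 * i) (hmono₁ : s (i - 1) ≤ s i)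
    (hmono₂ : s i ≤ s (i + 1)) :
    1 - s i ≤ 3 * n / r * (s i - s (i - 1)) := by
  have hstep : gamma n k r i * (1 - s i) ≤ beta n k i * (s i - s (i - 1)) := by
    rw [hs.beta_mul_sub hr hki hin.le]
    nlinarith [alpha_nonneg hr.le hin.le]
  have hki' : (k : ℝ) < i := by exact_mod_cast hki
  have hin' : (i : ℝ) < n := by exact_mod_cast hin
  have hn' : (n : ℝ) + 2 * k ≤ 3 * i := by exact_mod_cast hn
  have hn0 : (0 : ℝ) < n := by linarith [(Nat.cast_nonneg k : (0 : ℝ) ≤ k)]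
  unfold gamma beta at hstep
  rw [div_mul_eq_mul_div, div_mul_eq_mul_div, div_le_div_iff_of_pos_right hn0] at hstep
  have hβ : ((i : ℝ) - k) * n + i * (n - i) ≤ 3 * n * (i - k) := by nlinarith
  rw [div_mul_eq_mul_div, le_div_iff₀ hr]
  refine le_of_mul_le_mul_left ?_ (sub_pos.mpr hki')
  nlinarith

theorem one_sub_le_of_firstStep (hr : 5 < r) (hle : ∀ i, k ≤ i → i ≤ n → s i ≤ 1)
    (hmono : ∀ i, k ≤ i → i < n → s i ≤ s (i + 1)) {ε : ℝ}
    (hfirst : s (k + 1) - s k ≤ ε)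
    (hrec : ∀ i, k < i → i ≤ n → FirstStep n k r s i) (j : ℕ)
    (hj₂ : k + 2 * (j + 1) ≤ n) (hj₃ : n ≤ k + 3 * (j + 1)) :
    1 - s k ≤ ε / (1 - 5 / r) * (1 + 3 * n / (r * (j + 1))) := by
  have hr0 : 0 < r := by linarith
  set q := 5 / r with hq
  have hq0 : 0 ≤ q := by positivity
  have hq1 : q < 1 := by rw [hq, div_lt_one hr0]; exact hr
  have hgeomSum : ∀ N, ∑ i ∈ range N, q ^ i ≤ (1 - q)⁻¹ := fun N => by
    have := geom_sum_Ico_le_of_lt_one (m := 0) (n := N) hq0 hq1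
    rwa [← range_eq_Ico, pow_zero, one_div] at this
  set u : ℕ → ℝ := fun i => s (k + i + 1) - s (k + i)
  have hdecay : ∀ i < j, u (i + 1) ≤ q * u i := fun i hi =>
    (hrec (k + i + 1) (by omega) (by omega)).sub_le_mul_sub hr0 (by omega) (by omega)
      (hle _ (by omega) (by omega)) (hmono _ (by omega) (by omega))
  have hgeom : ∀ i ≤ j, u i ≤ q ^ i * ε := fun i hi =>
    (le_geom hq0 i fun l hl => hdecay l (by omega)).trans
      (mul_le_mul_of_nonneg_left hfirst (pow_nonneg hq0 i))
  have hε : 0 ≤ ε := (sub_nonneg.mpr (hmono k le_rfl (by omega))).trans hfirst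
  have hsum : s (k + (j + 1)) - s k ≤ (1 - q)⁻¹ * ε :=
    calc s (k + (j + 1)) - s k = ∑ i ∈ range (j + 1), u i :=
          (sum_range_sub (fun i => s (k + i)) (j + 1)).symm
      _ ≤ ∑ i ∈ range (j + 1), q ^ i * ε :=
          sum_le_sum fun i hi => hgeom i (Nat.lt_succ_iff.mp (mem_range.mp hi))
      _ = (∑ i ∈ range (j + 1), q ^ i) * ε := (sum_mul ..).symm
      _ ≤ (1 - q)⁻¹ * ε := by gcongr; exact hgeomSum _
  have htail : 1 - s (k + (j + 1)) ≤ 3 * n / r * (q ^ j * ε) :=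
    ((hrec (k + (j + 1)) (by omega) (by omega)).one_sub_le hr0 (by omega) (by omega) (by omega)
      (hmono _ (by omega) (by omega)) (hmono _ (by omega) (by omega))).trans
      (mul_le_mul_of_nonneg_left (hgeom j le_rfl) (by positivity))
  have hpow : q ^ j ≤ (1 - q)⁻¹ / (j + 1) := by
    rw [le_div_iff₀ (by positivity), mul_comm]
    exact (succ_mul_pow_le_geom_sum hq0 hq1.le j).trans (hgeomSum _)
  calc 1 - s k = (s (k + (j + 1)) - s k) + (1 - s (k + (j + 1))) := by ring
    _ ≤ (1 - q)⁻¹ * ε + 3 * n / r * ((1 - q)⁻¹ / (j + 1) * ε) :=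
        add_le_add hsum (htail.trans (by gcongr))
    _ = ε / (1 - q) * (1 + 3 * n / (r * (j + 1))) := by field_simp

theorem error_bound_le {n M L r : ℝ} (hr : 5 < r) (hL : 0 < L) (hLn : L ≤ n)
    (hLM : L ≤ 3 * M) :
    2 / (n * (r - 1)) / (1 - 5 / r) * (1 + 3 * n / (r * M)) ≤
      64 * r / ((r - 5) * (r - 1) * L) := by
  have hr1 : 0 < r - 1 := by linarith
  have hr5 : 0 < r - 5 := by linarith
  have hn : 0 < n := hL.trans_le hLn
  have hM : 0 < M := by linarith
  have hinv : 1 / n + 3 / (r * M) ≤ 32 / L := by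
    have h1 : 1 / n ≤ 1 / L := one_div_le_one_div_of_le hL hLn
    have h2 : 3 / (r * M) ≤ 3 / L := by
      gcongr
      nlinarith
    calc 1 / n + 3 / (r * M) ≤ 1 / L + 3 / L := add_le_add h1 h2
      _ ≤ 32 / L := by rw [← add_div]; gcongr; norm_num
  calc _ = 2 * r / ((r - 5) * (r - 1)) * (1 / n + 3 / (r * M)) := by field_simp
    _ ≤ 2 * r / ((r - 5) * (r - 1)) * (32 / L) := by gcongr
    _ = 64 * r / ((r - 5) * (r - 1) * L) := by field_simp; ring

end Urchin

theorem sk_lower_bound_log_general (n k : ℕ) (r : ℝ) (hr : 5 < r) (s : ℕ → ℝ)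
    (hbound : ∀ i, k ≤ i → i ≤ n + 1 → 0 ≤ s i ∧ s i ≤ 1)
    (hmono : ∀ i, k ≤ i → i < n → s i ≤ s (i + 1))
    (hfirst : s k ≥ (1 - 2 / ((n : ℝ) * (r - 1))) * s (k + 1))
    (hrec : ∀ i, k + 1 ≤ i → i ≤ n →
      s i = (r * i * ((n : ℝ) - i) / n * s (i + 1)
              + ((((i : ℝ) - k) * n + i * ((n : ℝ) - i)) / n) * s (i - 1)
              + r * ((i : ℝ) - k) / n)
        / (r * i * ((n : ℝ) - i) / n
              + (((i : ℝ) - k) * n + i * ((n : ℝ) - i)) / n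
              + r * ((i : ℝ) - k) / n))
    (hn3 : 3 ≤ n) (hkb : (k : ℝ) ≤ (n : ℝ) - Real.sqrt ((n : ℝ) * Real.log n)) :
    s k ≥ 1 - 64 * r / ((r - 5) * (r - 1) * Real.log n) := by
  have hn3' : (3 : ℝ) ≤ n := by exact_mod_cast hn3
  have hL1 : 1 ≤ Real.log n := one_le_log_of_three_le hn3'
  have hLn : Real.log n ≤ n := by
    linarith [Real.log_le_sub_one_of_pos (by linarith : (0 : ℝ) < n)]
  have hgap : 1 < Real.sqrt ((n : ℝ) * Real.log n) := by
    rw [Real.lt_sqrt zero_le_one]; nlinarith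
  obtain ⟨j, hj₂, hj₃, hLj⟩ := exists_succ_le_of_le_sub (n := n) (k := k)
    (by linarith [log_le_sqrt_mul_log (by linarith : (1 : ℝ) ≤ n)]) (by linarith)
  have hε : s (k + 1) - s k ≤ 2 / ((n : ℝ) * (r - 1)) := by
    have hs := hbound (k + 1) (by omega) (by omega)
    have : 0 ≤ 2 / ((n : ℝ) * (r - 1)) := div_nonneg zero_le_two (by nlinarith)
    nlinarith
  have hmain := Urchin.one_sub_le_of_firstStep hr (fun i h₁ h₂ => (hbound i h₁ (by omega)).2)
    hmono hε hrec j hj₂ hj₃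
  have hnum := Urchin.error_bound_le hr (by linarith) hLn hLj
  linarith

/-- If moreover `n ≥ 3` and `k ≤ n - √(n·log n)`, then
`s_k ≥ 1 - 64r/((r-5)(r-1)·log n)` for the absorption probabilities of the Markov
chain `M_k^2`. -/
theorem sk_lower_bound_log (n k : ℕ) (hn : 2 ≤ n) (hk1 : 1 ≤ k) (hk2 : k ≤ n - 1)
    (r : ℝ) (hr : 5 < r) (s : ℕ → ℝ)
    (hbound : ∀ i, k ≤ i → i ≤ n + 1 → 0 ≤ s i ∧ s i ≤ 1)
    (htop : s (n + 1) = 1)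
    (hmono : ∀ i, k ≤ i → i < n → s i ≤ s (i + 1))
    (hfirst : s k ≥ (1 - 2 / ((n : ℝ) * (r - 1))) * s (k + 1))
    (hrec : ∀ i, k + 1 ≤ i → i ≤ n →
      s i = (r * i * ((n : ℝ) - i) / n * s (i + 1)
              + ((((i : ℝ) - k) * n + i * ((n : ℝ) - i)) / n) * s (i - 1)
              + r * ((i : ℝ) - k) / n)
        / (r * i * ((n : ℝ) - i) / n
              + (((i : ℝ) - k) * n + i * ((n : ℝ) - i)) / n
              + r * ((i : ℝ) - k) / n))
    (hn3 : 3 ≤ n) (hkb : (k : ℝ) ≤ (n : ℝ) - Real.sqrt ((n : ℝ) * Real.log n)) :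
    s k ≥ 1 - 64 * r / ((r - 5) * (r - 1) * Real.log n) :=
  sk_lower_bound_log_general n k r hr s hbound hmono hfirst hrec hn3 hkb
end

section
/- Under the hypotheses of the context (the absorption probabilities s_k,…,s_n of the Markov chain M_k^2), if in addition r < n, then s_k > 1/n. -/
set_option maxHeartbeats 2000000 in
/-- If moreover `r < n`, then `s_k > 1/n` for the absorption probabilities of the
Markov chain `M_k^2`. -/
theorem sk_trivial_lower_bound (n k : ℕ) (hn : 2 ≤ n) (hk1 : 1 ≤ k) (hk2 : k ≤ n - 1)
    (r : ℝ) (hr : 5 < r) (s : ℕ → ℝ)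
    (hbound : ∀ i, k ≤ i → i ≤ n + 1 → 0 ≤ s i ∧ s i ≤ 1)
    (htop : s (n + 1) = 1)
    (hmono : ∀ i, k ≤ i → i < n → s i ≤ s (i + 1))
    (hfirst : s k ≥ (1 - 2 / ((n : ℝ) * (r - 1))) * s (k + 1))
    (hrec : ∀ i, k + 1 ≤ i → i ≤ n →
      s i = (r * i * ((n : ℝ) - i) / n * s (i + 1)
              + ((((i : ℝ) - k) * n + i * ((n : ℝ) - i)) / n) * s (i - 1)
              + r * ((i : ℝ) - k) / n)
        / (r * i * ((n : ℝ) - i) / n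
              + (((i : ℝ) - k) * n + i * ((n : ℝ) - i)) / n
              + r * ((i : ℝ) - k) / n))
    (hrn : r < (n : ℝ)) :
    s k > 1 / (n : ℝ) := by
  have hk1n : k + 1 ≤ n := by omega
  have hN2 : (2:ℝ) ≤ (n:ℝ) := by exact_mod_cast hn
  have hK1 : (1:ℝ) ≤ (k:ℝ) := by exact_mod_cast hk1
  have hKN : (k:ℝ) + 1 ≤ (n:ℝ) := by exact_mod_cast hk1n
  have hN0 : (0:ℝ) < (n:ℝ) := by linarith
  have hr1 : (0:ℝ) < r - 1 := by linarith
  set N : ℝ := (n:ℝ) with hNdef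
  set K : ℝ := (k:ℝ) with hKdef
  set ε : ℝ := 2 / (N * (r - 1)) with hεdef
  clear_value N K ε
  have hNr : (0:ℝ) < N * (r - 1) := by positivity
  have hεpos : 0 < ε := by rw [hεdef]; positivity
  have hε1 : ε ≤ 1/4 := by
    rw [hεdef, div_le_div_iff₀ hNr (by norm_num)]
    nlinarith
  have hy0 : 0 ≤ s k := (hbound k le_rfl (by omega)).1
  have hx0 : 0 ≤ s (k+1) := (hbound (k+1) (by omega) (by omega)).1
  have hx1 : s (k+1) ≤ 1 := (hbound (k+1) (by omega) (by omega)).2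
  have hz : s (k+1) ≤ s (k+2) := by
    rcases eq_or_lt_of_le hk1n with h | h
    · have h2 : k + 2 = n + 1 := by omega
      rw [h2, htop]; exact hx1
    · exact hmono (k+1) (by omega) h
  -- recurrence at i = k+1
  have hR := hrec (k+1) le_rfl hk1n
  have hsub : k + 1 - 1 = k := by omega
  rw [hsub] at hR
  push_cast at hR
  rw [← hKdef] at hR
  set a : ℝ := r * (K+1) * (N - (K+1)) / N with hadef
  set b : ℝ := ((K + 1 - K) * N + (K+1) * (N - (K+1))) / N with hbdef
  set g : ℝ := r * (K + 1 - K) / N with hgdef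
  clear_value a b g
  have hNK : (0:ℝ) ≤ N - (K+1) := by linarith
  have ha0 : 0 ≤ a := by
    rw [hadef]; apply div_nonneg _ (le_of_lt hN0)
    exact mul_nonneg (mul_nonneg (by linarith) (by linarith)) hNK
  have hb' : b = (N + (K+1) * (N - (K+1))) / N := by rw [hbdef]; ring_nf
  have hg' : g = r / N := by rw [hgdef]; ring_nf
  have hP0 : 0 ≤ (K+1) * (N - (K+1)) := mul_nonneg (by linarith) hNK
  have hb0 : 0 < b := by
    rw [hb']; apply div_pos _ hN0; linarith
  have hg0 : 0 < g := by
    rw [hg']; apply div_pos _ hN0; linarith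
  have hD : 0 < a + b + g := by linarith
  rw [eq_div_iff (ne_of_gt hD)] at hR
  -- key inequality: s(k+1) * (g + b*ε) ≥ g
  have hfirst' : s k ≥ (1 - ε) * s (k+1) := hfirst
  have hkey1 : g ≤ s (k+1) * (g + b * ε) := by
    nlinarith [mul_nonneg ha0 (sub_nonneg.2 hz),
      mul_nonneg (le_of_lt hb0) (sub_nonneg.2 hfirst')]
  -- arithmetic: N * (1-ε) * g > g + b * ε
  have hP4 : 4 * ((K+1) * (N - (K+1))) ≤ N^2 := by nlinarith [sq_nonneg (2*(K+1) - N)]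
  have hnum : 0 < r*N^2*(r-1) - 2*r*N - r*N*(r-1)
      - 2*(N + (K+1) * (N - (K+1))) := by
    have h20 : (0:ℝ) ≤ r*(r-1) - 20 := by nlinarith [mul_pos (by linarith : (0:ℝ) < r - 5) (by linarith : (0:ℝ) < r + 4)]
    have hNN : (0:ℝ) ≤ N * (N - 1) := mul_nonneg (by linarith) (by linarith)
    have t1 : (0:ℝ) ≤ (N * (N - 1)) * (r*(r-1) - 20) := mul_nonneg hNN h20
    have t2 : (0:ℝ) ≤ N * (N - r) := mul_nonneg (by linarith) (by linarith)
    have t3 : (0:ℝ) ≤ N * (17.5*N - 35) := mul_nonneg (by linarith) (by linarith)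
    nlinarith [hP4, hP0, t1, t2, t3]
  have hkey2 : g + b * ε < N * (1 - ε) * g := by
    rw [← sub_pos]
    have heq : N * (1 - ε) * g - (g + b * ε)
        = (r*N^2*(r-1) - 2*r*N - r*N*(r-1) - 2*(N + (K+1) * (N - (K+1))))
          / (N^2*(r-1)) := by
      rw [hg', hb', hεdef]; field_simp; ring
    rw [heq]
    exact div_pos hnum (mul_pos (pow_pos hN0 2) hr1)
  have hgb : 0 < g + b * ε := by nlinarith [mul_pos hb0 hεpos]
  have hNε0 : (0:ℝ) ≤ N * (1 - ε) := by nlinarith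
  have hx : 1 < N * (1 - ε) * s (k+1) := by
    nlinarith [mul_le_mul_of_nonneg_left hkey1 hNε0, hkey2, hgb, mul_pos hgb hgb]
  rw [gt_iff_lt, div_lt_iff₀ hN0]
  nlinarith [hx, mul_le_mul_of_nonneg_left hfirst' (le_of_lt hN0)]
end

section
/- For every real r > 5 there exist a real c > 0 and n₀ ∈ ℕ such that for all n ≥ n₀ the following holds. Let h_1,…,h_{n−1} and s_1,…,s_{n−1} be real numbers with 0 < h_k ≤ 1, 0 < s_k ≤ 1, and h_k·s_k < 1 for every k ∈ {1,…,n−1}, and suppose that for every such k: (i) h_k ≥ 1 − (k+2)/(n(r−1)); (ii) s_k ≥ 1/n; (iii) if k ≤ n/2 then s_k ≥ 1 − 256r/((r−5)(r−1)·n); and (iv) if k ≤ n − √(n·log n) then s_k ≥ 1 − 64r/((r−5)(r−1)·log n), where log is the natural logarithm. Define λ_k = h_k·s_k/(1 − h_k·s_k). Then 1/(1 + Σ_{k=1}^{n−1} Π_{j=1}^{k} (1/λ_j)) ≥ 1 − c/n. -/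
/-!
The inverse biases `q_j = (1 - h_j s_j) / (h_j s_j)` satisfy `q_1 = O(1/n)` by (i) and (iii),
`q_j ≤ 1/2` for `j ≤ m := ⌊n - √(n log n)⌋` by (i) and (iv), and `q_j ≤ 2n` for every `j` by (i)
and (ii). So the prefix products `Π_{j ≤ k} q_j` with `k ≤ m` are at most `q_1 2^{1-k}` and sum to
`O(1/n)`, while each of the fewer than `√(n log n)` remaining ones is at most
`2^{-m} (2n)^{√(n log n)} ≤ n^{-2}`, because `(log n)^3 = o(n)`. Finally `1/(1 + S) ≥ 1 - S`.
-/

open Finset Real Filter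

/-- `q j` plays the role of the inverse forward bias `1 / λ_j`. -/
noncomputable def absorptionProb (q : ℕ → ℝ) (n : ℕ) : ℝ :=
  1 / (1 + ∑ k ∈ Icc 1 (n - 1), ∏ j ∈ Icc 1 k, q j)

lemma one_sub_le_absorptionProb {q : ℕ → ℝ} {n : ℕ} {S : ℝ}
    (hq : ∀ j ∈ Icc 1 (n - 1), 0 ≤ q j)
    (hS : ∑ k ∈ Icc 1 (n - 1), ∏ j ∈ Icc 1 k, q j ≤ S) :
    1 - S ≤ absorptionProb q n := by
  have h0 : 0 ≤ ∑ k ∈ Icc 1 (n - 1), ∏ j ∈ Icc 1 k, q j :=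
    sum_nonneg fun k hk => prod_nonneg fun j hj =>
      hq j (Icc_subset_Icc_right (mem_Icc.1 hk).2 hj)
  rw [absorptionProb, le_div_iff₀ (by linarith)]
  nlinarith

lemma one_sub_div_le_one_sub_div {a t : ℝ} (ha : 0 < a) (hat : a ≤ t) :
    (1 - t) / t ≤ (1 - a) / a := by
  rw [sub_div, sub_div, div_self (ha.trans_le hat).ne', div_self ha.ne']
  gcongr

lemma add_sub_one_le_mul {a b : ℝ} (ha : a ≤ 1) (hb : b ≤ 1) : a + b - 1 ≤ a * b := by
  nlinarith

lemma prod_le_pow_card_of_nonneg {ι : Type*} {s : Finset ι} {f : ι → ℝ} {c : ℝ}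
    (h0 : ∀ i ∈ s, 0 ≤ f i) (hc : ∀ i ∈ s, f i ≤ c) : ∏ i ∈ s, f i ≤ c ^ #s :=
  (prod_le_prod h0 hc).trans_eq (prod_const c)

lemma prod_Icc_le_pow_mul_pow {q : ℕ → ℝ} {m k : ℕ} {a b : ℝ} (hmk : m ≤ k)
    (h0 : ∀ j ∈ Icc 1 k, 0 ≤ q j) (ha : ∀ j ∈ Icc 1 m, q j ≤ a)
    (hb : ∀ j ∈ Ioc m k, q j ≤ b) :
    ∏ j ∈ Icc 1 k, q j ≤ a ^ m * b ^ (k - m) := by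
  have hI : ∀ i, Icc 1 i = Ioc 0 i := fun i => Icc_add_one_left_eq_Ioc 0 i
  have hhead := prod_le_pow_card_of_nonneg (s := Icc 1 m)
    (fun j hj => h0 j (Icc_subset_Icc_right hmk hj)) ha
  have htail := prod_le_pow_card_of_nonneg (s := Ioc m k)
    (fun j hj => h0 j (hI k ▸ Ioc_subset_Ioc_left (Nat.zero_le m) hj)) hb
  rw [Nat.card_Icc, Nat.add_sub_cancel] at hhead
  rw [Nat.card_Ioc] at htail
  rw [hI k, ← prod_Ioc_consecutive q (Nat.zero_le m) hmk, ← hI m]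
  refine mul_le_mul hhead htail ?_ (le_trans ?_ hhead)
  · exact prod_nonneg fun j hj => h0 j (hI k ▸ Ioc_subset_Ioc_left (Nat.zero_le m) hj)
  · exact prod_nonneg fun j hj => h0 j (Icc_subset_Icc_right hmk hj)

lemma sum_prod_Icc_le {q : ℕ → ℝ} {m n : ℕ} {B : ℝ} (hm : 1 ≤ m) (hmn : m ≤ n) (hB : 1 ≤ B)
    (h0 : ∀ j ∈ Icc 1 n, 0 ≤ q j) (hhalf : ∀ j ∈ Icc 1 m, q j ≤ 1 / 2)
    (hqB : ∀ j ∈ Icc 1 n, q j ≤ B) :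
    ∑ k ∈ Icc 1 n, ∏ j ∈ Icc 1 k, q j ≤ 2 * q 1 + (n - m : ℕ) * B ^ (n - m) / 2 ^ m := by
  have hhead : ∑ k ∈ Icc 1 m, ∏ j ∈ Icc 1 k, q j ≤ 2 * q 1 := by
    have hq1 : 0 ≤ q 1 := h0 1 (mem_Icc.2 ⟨le_rfl, hm.trans hmn⟩)
    calc ∑ k ∈ Icc 1 m, ∏ j ∈ Icc 1 k, q j ≤ ∑ k ∈ Icc 1 m, q 1 * (1 / 2) ^ (k - 1) := by
          refine sum_le_sum fun k hk => ?_
          obtain ⟨hk1, hkm⟩ := mem_Icc.1 hk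
          simpa using prod_Icc_le_pow_mul_pow hk1
            (fun j hj => h0 j (Icc_subset_Icc_right (hkm.trans hmn) hj))
            (fun j hj => by rw [Icc_self, mem_singleton] at hj; rw [hj])
            (fun j hj => hhalf j (Icc_subset_Icc_right hkm (Ioc_subset_Icc_self hj)))
      _ = q 1 * ∑ i ∈ range m, (1 / 2) ^ i := by
          rw [← mul_sum, range_eq_Ico, ← sum_Ico_add_right_sub_eq (f := fun i => (1 / 2 : ℝ) ^ i),
            zero_add, Ico_add_one_right_eq_Icc]
      _ ≤ 2 * q 1 := by nlinarith [sum_geometric_two_le m]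
  have htail : ∑ k ∈ Ioc m n, ∏ j ∈ Icc 1 k, q j ≤ (n - m : ℕ) * B ^ (n - m) / 2 ^ m := by
    calc ∑ k ∈ Ioc m n, ∏ j ∈ Icc 1 k, q j ≤ ∑ k ∈ Ioc m n, (1 / 2) ^ m * B ^ (n - m) := by
          refine sum_le_sum fun k hk => ?_
          obtain ⟨hmk, hkn⟩ := mem_Ioc.1 hk
          refine (prod_Icc_le_pow_mul_pow hmk.le
            (fun j hj => h0 j (Icc_subset_Icc_right hkn hj)) hhalf
            (fun j hj => hqB j (Icc_subset_Icc hm hkn (Ioc_subset_Icc_self hj)))).trans ?_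
          gcongr
      _ = (n - m : ℕ) * B ^ (n - m) / 2 ^ m := by
          rw [sum_const, Nat.card_Ioc, nsmul_eq_mul, one_div_pow]
          ring
  have hI : ∀ i, Icc 1 i = Ioc 0 i := fun i => Icc_add_one_left_eq_Ioc 0 i
  rw [hI n, ← sum_Ioc_consecutive _ (Nat.zero_le m) hmn, ← hI m]
  linarith

lemma eventually_mul_log_pow_le {c : ℝ} (hc : 0 < c) (n : ℕ) :
    ∀ᶠ x : ℝ in atTop, c * log x ^ n ≤ x := by
  filter_upwards [isLittleO_pow_log_id_atTop.bound (inv_pos.2 hc), eventually_ge_atTop 0]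
    with x hx hx0
  rw [norm_eq_abs, id, norm_eq_abs, abs_of_nonneg hx0] at hx
  calc c * log x ^ n ≤ c * (c⁻¹ * x) := by gcongr; exact (le_abs_self _).trans hx
    _ = x := by field_simp

lemma sqrt_mul_log_mul_log_le {x : ℝ} (hL : 0 ≤ log x) (hL3 : 64 * log x ^ 3 ≤ x) :
    √(x * log x) * log x ≤ x / 8 := by
  have hx : 0 ≤ x := le_trans (by positivity) hL3
  refine (pow_le_pow_iff_left₀ (by positivity) (by positivity) two_ne_zero).1 ?_
  rw [mul_pow, sq_sqrt (by positivity)]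
  nlinarith

lemma mul_two_mul_pow_div_two_pow_le {x : ℝ} {d m : ℕ} (hL : 1 ≤ log x)
    (hL3 : 64 * log x ^ 3 ≤ x) (hd : d ≤ √(x * log x)) (hm : x - √(x * log x) - 1 ≤ m) :
    d * (2 * x) ^ d / 2 ^ m ≤ 1 / x := by
  set L := log x
  set W := √(x * L)
  have hL_le : L ≤ L ^ 3 := le_self_pow₀ hL (by norm_num)
  have hx : 64 ≤ x := by nlinarith
  have hWL : W * L ≤ x / 8 := sqrt_mul_log_mul_log_le (by linarith) hL3
  have hW : W ≤ x / 8 := (le_mul_of_one_le_right (sqrt_nonneg _) hL).trans hWL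
  have hlog : log (x ^ 2 * (2 * x) ^ d) ≤ log (2 ^ m) := by
    rw [log_mul (by positivity) (by positivity), log_pow, log_pow, log_pow,
      log_mul two_ne_zero (by positivity)]
    have hlog2 := log_two_lt_d9
    have hlog2' := log_two_gt_d9
    have h1 : d * (log 2 + L) ≤ W * (2 * L) :=
      mul_le_mul hd (by linarith) (by positivity) (sqrt_nonneg _)
    have h2 : (m : ℝ) * (1 / 2) ≤ m * log 2 :=
      mul_le_mul_of_nonneg_left (by linarith) (Nat.cast_nonneg m)
    push_cast
    linarith
  have hpow : x ^ 2 * (2 * x) ^ d ≤ 2 ^ m :=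
    (log_le_log_iff (by positivity) (by positivity)).1 hlog
  rw [div_le_div_iff₀ (by positivity) (by positivity)]
  calc d * (2 * x) ^ d * x ≤ x * (2 * x) ^ d * x := by gcongr; linarith
    _ = x ^ 2 * (2 * x) ^ d := by ring
    _ ≤ 1 * 2 ^ m := by linarith

lemma sum_prod_one_sub_div_le {t : ℕ → ℝ} {n : ℕ} {δ : ℝ} (hL : 1 ≤ log n)
    (hL3 : 64 * log n ^ 3 ≤ n) (ht1 : ∀ j ∈ Icc 1 (n - 1), t j ≤ 1)
    (ht : ∀ j ∈ Icc 1 (n - 1), 1 / (2 * n) ≤ t j)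
    (ht_bulk : ∀ j ∈ Icc 1 (n - 1), (j : ℝ) ≤ n - √(n * log n) → 11 / 16 ≤ t j)
    (ht_one : 1 - δ ≤ t 1) (hδ : δ ≤ 1 / 2) :
    ∑ k ∈ Icc 1 (n - 1), ∏ j ∈ Icc 1 k, (1 - t j) / t j ≤ 4 * δ + 1 / n := by
  set x : ℝ := (n : ℝ)
  set W := √(x * log x)
  have hx : 64 ≤ x := by nlinarith [le_self_pow₀ hL (by norm_num : 3 ≠ 0)]
  have hW_pos : 0 < W := sqrt_pos.2 (by positivity)
  have hW : W ≤ x / 8 :=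
    (le_mul_of_one_le_right hW_pos.le hL).trans (sqrt_mul_log_mul_log_le (by linarith) hL3)
  -- below the cut point `m` every forward bias `t / (1 - t)` is at least `2`
  set m := ⌊x - W⌋₊
  have hmx : (m : ℝ) ≤ x - W := Nat.floor_le (by linarith)
  have hm1 : 1 ≤ m := (Nat.one_le_floor_iff _).2 (by linarith)
  have hmn : m ≤ n - 1 := by
    have : (m : ℝ) < n := by linarith
    exact Nat.le_sub_one_of_lt (by exact_mod_cast this)
  have hm_gt : x - W - 1 < m := by linarith [Nat.lt_floor_add_one (x - W)]
  have hd : ((n - 1 - m : ℕ) : ℝ) ≤ W := by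
    rw [Nat.cast_sub hmn, Nat.cast_sub (hm1.trans hmn |>.trans (Nat.sub_le n 1))]
    push_cast
    linarith
  have htpos : ∀ j ∈ Icc 1 (n - 1), 0 < t j := fun j hj =>
    lt_of_lt_of_le (by positivity) (ht j hj)
  have hδ0 : 0 ≤ δ := by linarith [ht1 1 (mem_Icc.2 ⟨le_rfl, hm1.trans hmn⟩)]
  have hq_one : (1 - t 1) / t 1 ≤ 2 * δ := by
    refine (one_sub_div_le_one_sub_div (by linarith) ht_one).trans ?_
    rw [sub_sub_cancel, div_le_iff₀ (by linarith)]
    nlinarith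
  have hsum := sum_prod_Icc_le (q := fun j => (1 - t j) / t j) (B := 2 * x) hm1 hmn (by linarith)
    (fun j hj => div_nonneg (sub_nonneg.2 (ht1 j hj)) (htpos j hj).le)
    (fun j hj => (one_sub_div_le_one_sub_div (by norm_num) (ht_bulk j (Icc_subset_Icc_right hmn hj)
      (le_trans (by exact_mod_cast (mem_Icc.1 hj).2) hmx))).trans (by norm_num))
    (fun j hj => by
      refine (one_sub_div_le_one_sub_div (by positivity) (ht j hj)).trans ?_
      rw [div_le_iff₀ (by positivity)]
      field_simp
      linarith)
  have htail := mul_two_mul_pow_div_two_pow_le hL hL3 hd hm_gt.le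
  linarith

lemma le_of_ge_one_sub_add_two_div {r x y j : ℝ} (hr : 5 < r) (hx : 8 ≤ x) (hj : j + 1 ≤ x)
    (hy : y ≥ 1 - (j + 2) / (x * (r - 1))) : 23 / 32 ≤ y := by
  have : (j + 2) / (x * (r - 1)) ≤ 9 / 32 := by
    rw [div_le_iff₀ (by nlinarith)]
    nlinarith
  linarith

lemma one_sub_div_le_absorptionProb {r : ℝ} {n : ℕ} {h s : ℕ → ℝ} (hr : 5 < r)
    (hnC : 2 * (3 / (r - 1) + 256 * r / ((r - 5) * (r - 1))) ≤ n)
    (hnD : 32 * (64 * r / ((r - 5) * (r - 1))) ≤ log n)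
    (hL : 1 ≤ log n) (hL3 : 64 * log n ^ 3 ≤ n)
    (hhs : ∀ k, 1 ≤ k → k ≤ n - 1 →
      0 < h k ∧ h k ≤ 1 ∧ 0 < s k ∧ s k ≤ 1 ∧ h k * s k < 1)
    (hh : ∀ k, 1 ≤ k → k ≤ n - 1 → h k ≥ 1 - ((k : ℝ) + 2) / ((n : ℝ) * (r - 1)))
    (hs : ∀ k, 1 ≤ k → k ≤ n - 1 → s k ≥ 1 / (n : ℝ))
    (hs_half : ∀ k, 1 ≤ k → k ≤ n - 1 → (k : ℝ) ≤ (n : ℝ) / 2 →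
      s k ≥ 1 - 256 * r / ((r - 5) * (r - 1) * n))
    (hs_log : ∀ k, 1 ≤ k → k ≤ n - 1 → (k : ℝ) ≤ (n : ℝ) - √((n : ℝ) * log n) →
      s k ≥ 1 - 64 * r / ((r - 5) * (r - 1) * log n)) :
    1 - (4 * (3 / (r - 1) + 256 * r / ((r - 5) * (r - 1))) + 1) / n ≤
      absorptionProb (fun j => (1 - h j * s j) / (h j * s j)) n := by
  simp only [← and_imp, ← mem_Icc] at hhs hh hs
  have hx : (64 : ℝ) ≤ n := by nlinarith [le_self_pow₀ hL (by norm_num : 3 ≠ 0)]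
  have hn : 2 ≤ n := by exact_mod_cast (by linarith : (2 : ℝ) ≤ n)
  have h1 : 1 ∈ Icc 1 (n - 1) := mem_Icc.2 ⟨le_rfl, by omega⟩
  have hh_ge : ∀ j ∈ Icc 1 (n - 1), 23 / 32 ≤ h j := fun j hj =>
    le_of_ge_one_sub_add_two_div hr (by linarith)
      (by exact_mod_cast (by have := mem_Icc.1 hj; omega : j + 1 ≤ n)) (hh j hj)
  have ht_gen : ∀ j ∈ Icc 1 (n - 1), 1 / (2 * (n : ℝ)) ≤ h j * s j := fun j hj => by
    calc 1 / (2 * (n : ℝ)) = 1 / 2 * (1 / n) := by ring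
      _ ≤ h j * s j :=
        mul_le_mul (by linarith [hh_ge j hj]) (hs j hj) (by positivity) (hhs j hj).1.le
  have ht_bulk : ∀ j ∈ Icc 1 (n - 1), (j : ℝ) ≤ n - √(n * log n) → 11 / 16 ≤ h j * s j :=
    fun j hj hjW => by
      have hD : 64 * r / ((r - 5) * (r - 1)) / log n ≤ 1 / 32 := by
        rw [div_le_iff₀ (by positivity)]
        linarith
      have hsj := hs_log j (mem_Icc.1 hj).1 (mem_Icc.1 hj).2 hjW
      rw [← div_div] at hsj
      linarith [add_sub_one_le_mul (hhs j hj).2.1 (hhs j hj).2.2.2.1, hh_ge j hj]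
  have ht_one : 1 - (3 / (r - 1) + 256 * r / ((r - 5) * (r - 1))) / n ≤ h 1 * s 1 := by
    have hh1 := hh 1 h1
    have hs1 := hs_half 1 le_rfl (mem_Icc.1 h1).2 (by push_cast; linarith)
    have hsplit : (3 / (r - 1) + 256 * r / ((r - 5) * (r - 1))) / n =
        3 / (n * (r - 1)) + 256 * r / ((r - 5) * (r - 1) * n) := by
      field_simp
    norm_num at hh1
    linarith [add_sub_one_le_mul (hhs 1 h1).2.1 (hhs 1 h1).2.2.2.1]
  have hsum := sum_prod_one_sub_div_le (t := fun j => h j * s j) hL hL3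
    (fun j hj => mul_le_one₀ (hhs j hj).2.1 (hhs j hj).2.2.1.le (hhs j hj).2.2.2.1)
    ht_gen ht_bulk ht_one (by rw [div_le_iff₀ (by positivity)]; linarith)
  refine le_trans (le_of_eq (by ring)) (one_sub_le_absorptionProb (fun j hj => ?_) hsum)
  exact div_nonneg (by linarith [(hhs j hj).2.2.2.2]) (mul_pos (hhs j hj).1 (hhs j hj).2.2.1).le

/-- Absorption-at-the-top probability of the birth–death chain built from the urchin
graph bounds: starting from state 1, the probability
`1/(1 + Σ_{k=1}^{n-1} Π_{j=1}^{k} 1/λ_j)` (with `λ_j = h_j s_j/(1 - h_j s_j)`, so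
`1/λ_j = (1 - h_j s_j)/(h_j s_j)`) is at least `1 - c/n`. -/
theorem birth_death_lower_bound (r : ℝ) (hr : 5 < r) :
    ∃ c : ℝ, 0 < c ∧ ∃ n₀ : ℕ, ∀ n : ℕ, n₀ ≤ n →
      ∀ h s : ℕ → ℝ,
      (∀ k, 1 ≤ k → k ≤ n - 1 →
        0 < h k ∧ h k ≤ 1 ∧ 0 < s k ∧ s k ≤ 1 ∧ h k * s k < 1) →
      (∀ k, 1 ≤ k → k ≤ n - 1 → h k ≥ 1 - ((k : ℝ) + 2) / ((n : ℝ) * (r - 1))) →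
      (∀ k, 1 ≤ k → k ≤ n - 1 → s k ≥ 1 / (n : ℝ)) →
      (∀ k, 1 ≤ k → k ≤ n - 1 → (k : ℝ) ≤ (n : ℝ) / 2 →
        s k ≥ 1 - 256 * r / ((r - 5) * (r - 1) * n)) →
      (∀ k, 1 ≤ k → k ≤ n - 1 → (k : ℝ) ≤ (n : ℝ) - Real.sqrt ((n : ℝ) * Real.log n) →
        s k ≥ 1 - 64 * r / ((r - 5) * (r - 1) * Real.log n)) →
      1 / (1 + ∑ k ∈ Finset.Icc 1 (n - 1), ∏ j ∈ Finset.Icc 1 k,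
            (1 - h j * s j) / (h j * s j))
        ≥ 1 - c / n := by
  have hr1 : 0 < r - 1 := by linarith
  have hr5 : 0 < r - 5 := by linarith
  set C := 3 / (r - 1) + 256 * r / ((r - 5) * (r - 1))
  set D := 64 * r / ((r - 5) * (r - 1))
  have hlog : Tendsto (fun n : ℕ => log n) atTop atTop :=
    tendsto_log_atTop.comp tendsto_natCast_atTop_atTop
  obtain ⟨n₀, hn₀⟩ := eventually_atTop.1 <|
    (tendsto_natCast_atTop_atTop.eventually_ge_atTop (2 * C)).and <|
    (hlog.eventually_ge_atTop (32 * D)).and <| (hlog.eventually_ge_atTop 1).and <|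
    tendsto_natCast_atTop_atTop.eventually (eventually_mul_log_pow_le (c := 64) (by norm_num) 3)
  refine ⟨4 * C + 1, by positivity, n₀, fun n hn h s hhs hh hs hs_half hs_log => ?_⟩
  obtain ⟨hnC, hnD, hL, hL3⟩ := hn₀ n hn
  exact one_sub_div_le_absorptionProb hr hnC hnD hL hL3 hhs hh hs hs_half hs_log
end

section
/- Let V be a finite set with |V| = n ≥ 1 and let r > 1 be real. Suppose that for every S with ∅ ⊊ S ⊊ V we are given x(S) ∈ S and y(S) ∈ V∖S, and that p : Finset V → ℝ satisfies 0 ≤ p(S) ≤ 1 for all S, p(∅)=0, p(V)=1, and p(S) = (r·p(S ∪ {y(S)}) + p(S ∖ {x(S)}))/(r+1) for every S with ∅ ⊊ S ⊊ V. Then for every u ∈ V, p({u}) = (1 − 1/r)/(1 − 1/rⁿ); in particular p({u}) ≥ 1 − 1/r. -/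
/-- Maximum principle for the homogeneous system: pushing a maximizer up to `univ`. -/
lemma isothermal_max_principle {V : Type*} [Fintype V] [DecidableEq V]
    (r : ℝ) (hr : 0 < r) (x y : Finset V → V)
    (hy : ∀ S : Finset V, S ≠ ∅ → S ≠ Finset.univ → y S ∉ S)
    (g : Finset V → ℝ) (h0 : g ∅ = 0) (h1 : g Finset.univ = 0)
    (hrec : ∀ S : Finset V, S ≠ ∅ → S ≠ Finset.univ →
      (r + 1) * g S = r * g (insert (y S) S) + g (S.erase (x S))) :
    ∀ S, g S ≤ 0 := by
  obtain ⟨S₀, -, hS₀⟩ := Finset.exists_max_image (Finset.univ : Finset (Finset V)) g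
    ⟨∅, Finset.mem_univ _⟩
  suffices h : g S₀ ≤ 0 by
    intro S; exact (hS₀ S (Finset.mem_univ S)).trans h
  have key : ∀ k : ℕ, ∀ S : Finset V, Fintype.card V - S.card ≤ k →
      (∀ T, g T ≤ g S) → g S ≤ 0 := by
    intro k
    induction k with
    | zero =>
      intro S hcard _
      have hS : S = Finset.univ := by
        apply Finset.eq_univ_of_card
        have := S.card_le_univ
        omega
      rw [hS, h1]
    | succ k ih =>
      intro S hcard hmax
      by_cases hSu : S = Finset.univ
      · rw [hSu, h1]
      by_cases hSe : S = ∅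
      · rw [hSe, h0]
      have hyS := hy S hSe hSu
      have hc' : (insert (y S) S).card = S.card + 1 := Finset.card_insert_of_notMem hyS
      have h2 := hrec S hSe hSu
      have h3 : g (S.erase (x S)) ≤ g S := hmax _
      have h4 : g S ≤ g (insert (y S) S) := by nlinarith [hmax (insert (y S) S)]
      have h5 : ∀ T, g T ≤ g (insert (y S) S) := fun T => (hmax T).trans h4
      have hcards : S.card < Fintype.card V :=
        lt_of_le_of_ne S.card_le_univ (fun h => hSu (Finset.eq_univ_of_card _ h))
      have hle : Fintype.card V - (insert (y S) S).card ≤ k := by omega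
      exact h4.trans (ih (insert (y S) S) hle h5)
  exact key _ S₀ le_rfl (fun T => hS₀ T (Finset.mem_univ T))

/-- The isothermal case of the linear system `L₀`: if all temperatures are equal, the
solution starting from a single vertex equals `(1 - 1/r)/(1 - 1/rⁿ)`, which is at least
`1 - 1/r`. -/
theorem isothermal_linear_system {V : Type*} [Fintype V] [DecidableEq V]
    (hn : 1 ≤ Fintype.card V) (r : ℝ) (hr : 1 < r) (x y : Finset V → V)
    (hxy : ∀ S : Finset V, S ≠ ∅ → S ≠ Finset.univ → x S ∈ S ∧ y S ∉ S)
    (p : Finset V → ℝ)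
    (hbound : ∀ S : Finset V, 0 ≤ p S ∧ p S ≤ 1)
    (hbot : p ∅ = 0) (htop : p Finset.univ = 1)
    (hrec : ∀ S : Finset V, S ≠ ∅ → S ≠ Finset.univ →
      p S = (r * p (insert (y S) S) + p (S.erase (x S))) / (r + 1)) :
    ∀ u : V, p {u} = (1 - 1 / r) / (1 - 1 / r ^ (Fintype.card V))
      ∧ p {u} ≥ 1 - 1 / r := by
  set n := Fintype.card V with hn'
  have hr0 : (0:ℝ) < r := by linarith
  have hrne : r ≠ 0 := ne_of_gt hr0
  have htlt : (1/r : ℝ) < 1 := by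
    rw [div_lt_one hr0]; exact hr
  have htpos : (0:ℝ) < 1/r := by positivity
  have htn : (1/r : ℝ) ^ n < 1 := by
    calc (1/r:ℝ)^n ≤ (1/r)^1 := pow_le_pow_of_le_one (le_of_lt htpos) (le_of_lt htlt) hn
    _ = 1/r := pow_one _
    _ < 1 := htlt
  set D : ℝ := 1 - (1/r)^n with hD
  have hDpos : 0 < D := by simp only [hD]; linarith
  have hDne : D ≠ 0 := ne_of_gt hDpos
  set f : ℕ → ℝ := fun k => (1 - (1/r)^k) / D with hf
  have hf0 : f 0 = 0 := by simp [hf]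
  have hfn : f n = 1 := by
    show (1 - (1/r)^n) / D = 1
    rw [← hD, div_self hDne]
  have hfrec : ∀ m : ℕ, (r + 1) * f (m + 1) = r * f (m + 2) + f m := by
    intro m
    simp only [hf, pow_succ]
    field_simp
    ring
  set g : Finset V → ℝ := fun S => p S - f S.card with hg
  have hg0 : g ∅ = 0 := by simp [hg, hbot, hf0]
  have hg1 : g Finset.univ = 0 := by
    simp [hg, htop, Finset.card_univ, ← hn', hfn]
  have hgrec : ∀ S : Finset V, S ≠ ∅ → S ≠ Finset.univ →
      (r + 1) * g S = r * g (insert (y S) S) + g (S.erase (x S)) := by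
    intro S hSe hSu
    obtain ⟨hx, hy⟩ := hxy S hSe hSu
    have hcS : 1 ≤ S.card := Finset.card_pos.mpr (Finset.nonempty_iff_ne_empty.mpr hSe)
    obtain ⟨m, hm⟩ : ∃ m, S.card = m + 1 := ⟨S.card - 1, by omega⟩
    have hci : (insert (y S) S).card = m + 2 := by
      rw [Finset.card_insert_of_notMem hy, hm]
    have hce : (S.erase (x S)).card = m := by
      rw [Finset.card_erase_of_mem hx, hm]
      omega
    have hp := hrec S hSe hSu
    have hr1 : (r + 1) ≠ 0 := by positivity
    have hp' : (r + 1) * p S = r * p (insert (y S) S) + p (S.erase (x S)) := by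
      rw [hp]; field_simp
    have := hfrec m
    simp only [hg, hci, hce, hm]
    nlinarith [hp', this]
  have hle := isothermal_max_principle r hr0 x y (fun S h1 h2 => (hxy S h1 h2).2) g hg0 hg1 hgrec
  have hge := isothermal_max_principle r hr0 x y (fun S h1 h2 => (hxy S h1 h2).2)
    (fun S => -g S) (by simp [hg0]) (by simp [hg1])
    (fun S h1 h2 => by have := hgrec S h1 h2; ring_nf; ring_nf at this; linarith)
  have hgeq : ∀ S, g S = 0 := fun S => le_antisymm (hle S) (by have := hge S; simp at this; linarith)
  intro u
  have hcard1 : ({u} : Finset V).card = 1 := Finset.card_singleton u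
  have hpu : p {u} = f 1 := by
    have := hgeq {u}
    simp only [hg, hcard1] at this
    linarith
  have hf1 : f 1 = (1 - 1 / r) / (1 - 1 / r ^ n) := by
    simp only [hf, hD, pow_one, one_div, inv_pow]
  refine ⟨by rw [hpu, hf1], ?_⟩
  rw [hpu, hf1]
  have hnum : (0:ℝ) ≤ 1 - 1/r := by linarith
  have hDeq : (1 - 1/r^n : ℝ) = D := by rw [hD, div_pow, one_pow]
  have hD1 : D ≤ 1 := by
    simp only [hD]
    nlinarith [pow_pos htpos n]
  rw [hDeq, ge_iff_le, le_div_iff₀ hDpos]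
  exact mul_le_of_le_one_right hnum hD1
end

section
/- (Thermal Theorem.) Let G=(V,E) be a finite connected undirected simple graph, let r > 1 be real, and let f be the fixation function for the generalized Moran process on G with fitness r. Then for every vertex v ∈ V, f({v}) ≥ (r−1)/(r + deg(v)/δ(G)), where δ(G) denotes the minimum degree of G. -/
theorem thermal_edge_inequality {r s da db P : ℝ} (hda : 0 < da) (hdb : 0 < db) (hs : 0 ≤ s)
    (hP : 0 ≤ P) (hsr : s ≤ (r - 1) * db) :
    0 ≤ r / da * ((1 - db / (db + s) * (da / (da + s) * P)) - (1 - da / (da + s) * P)) +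
      1 / db * ((1 - P) - (1 - da / (da + s) * P)) := by
  have key : r / da * ((1 - db / (db + s) * (da / (da + s) * P)) - (1 - da / (da + s) * P)) +
      1 / db * ((1 - P) - (1 - da / (da + s) * P)) =
      P * s * ((r - 1) * db - s) / (db * (da + s) * (db + s)) := by
    field_simp
    ring
  rw [key]
  have := sub_nonneg.2 hsr
  positivity

theorem sub_one_div_add_div_le_one_sub_div {r d δ : ℝ} (hr : 1 < r) (hd : 0 ≤ d) (hδ : 0 < δ) :
    (r - 1) / (r + d / δ) ≤ 1 - d / (d + (r - 1) * δ) := by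
  have hs : 0 < (r - 1) * δ := mul_pos (by linarith) hδ
  have hdδ : δ * (d / δ) = d := mul_div_cancel₀ d hδ.ne'
  rw [one_sub_div (by positivity), add_sub_cancel_left,
    div_le_div_iff₀ (by positivity) (by positivity)]
  nlinarith

open Finset

namespace SimpleGraph

variable {V : Type*} [Fintype V] {G : SimpleGraph V}

theorem Preconnected.exists_adj_mem_compl (hG : G.Preconnected) {S : Finset V} (hS : S ≠ ∅)
    (hSu : S ≠ univ) : ∃ a ∈ S, ∃ b ∉ S, G.Adj a b := by
  obtain ⟨a, ha⟩ := nonempty_iff_ne_empty.2 hS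
  obtain ⟨b, -, hb⟩ := exists_of_ssubset (ssubset_univ_iff.2 hSu)
  obtain ⟨d, -, hd, hd'⟩ := (hG a b).some.exists_boundary_dart (S : Set V) ha hb
  exact ⟨d.fst, hd, d.snd, hd', d.adj⟩

section Moran

variable (G) [DecidableRel G.Adj] [DecidableEq V]

noncomputable def moranEdgeTerm (r : ℝ) (g : Finset V → ℝ) (S : Finset V) (a b : V) : ℝ :=
  if G.Adj a b then
    r / G.degree a * (g (insert b S) - g S) + 1 / G.degree b * (g (S.erase a) - g S)
  else 0

/-- The expected rate of change of `g` from the mutant set `S`: along an edge `ab` leaving `S`,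
`a` invades `b` at rate `r / deg a` and `b` invades `a` at rate `1 / deg b`. -/
noncomputable def moranGenerator (r : ℝ) (g : Finset V → ℝ) (S : Finset V) : ℝ :=
  ∑ a ∈ S, ∑ b ∈ Sᶜ, G.moranEdgeTerm r g S a b

variable {G}

theorem moranGenerator_sub (r : ℝ) (g₁ g₂ : Finset V → ℝ) (S : Finset V) :
    G.moranGenerator r (g₁ - g₂) S = G.moranGenerator r g₁ S - G.moranGenerator r g₂ S := by
  simp only [moranGenerator, ← sum_sub_distrib]
  refine sum_congr rfl fun a _ => sum_congr rfl fun b _ => ?_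
  unfold moranEdgeTerm
  split_ifs
  · simp only [Pi.sub_apply]; ring
  · ring

theorem moranGenerator_eq (r : ℝ) (g : Finset V → ℝ) (S : Finset V) :
    G.moranGenerator r g S =
      (∑ a ∈ S, ∑ b ∈ Sᶜ, if G.Adj a b then
        r / G.degree a * g (insert b S) + 1 / G.degree b * g (S.erase a) else 0) -
      g S * ∑ a ∈ S, ∑ b ∈ Sᶜ, if G.Adj a b then r / G.degree a + 1 / G.degree b else 0 := by
  simp only [moranGenerator, mul_sum, ← sum_sub_distrib]
  refine sum_congr rfl fun a _ => sum_congr rfl fun b _ => ?_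
  unfold moranEdgeTerm
  split_ifs <;> ring

theorem moranEdgeTerm_nonneg_of_forall_le {r : ℝ} (hr : 0 ≤ r) {g : Finset V → ℝ}
    {S : Finset V} (hmin : ∀ S', g S ≤ g S') (a b : V) : 0 ≤ G.moranEdgeTerm r g S a b := by
  unfold moranEdgeTerm
  split_ifs
  · have := hmin (insert b S)
    have := hmin (S.erase a)
    positivity
  · rfl

theorem exists_erase_eq_of_moranGenerator_nonpos {r : ℝ} (hr : 0 ≤ r) (hG : G.Preconnected)
    {g : Finset V → ℝ} {T : Finset V} (hT : T ≠ ∅) (hTu : T ≠ univ) (hmin : ∀ S, g T ≤ g S)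
    (hgen : G.moranGenerator r g T ≤ 0) : ∃ a ∈ T, g (T.erase a) = g T := by
  have hterm := moranEdgeTerm_nonneg_of_forall_le (G := G) hr hmin
  obtain ⟨a, ha, b, hb, hab⟩ := hG.exists_adj_mem_compl hT hTu
  have hle : G.moranEdgeTerm r g T a b ≤ 0 :=
    ((single_le_sum (fun b _ => hterm a b) (mem_compl.2 hb)).trans
      (single_le_sum (fun a _ => sum_nonneg fun b _ => hterm a b) ha)).trans hgen
  rw [moranEdgeTerm, if_pos hab] at hle
  have hdb : (0 : ℝ) < G.degree b := Nat.cast_pos.2 hab.degree_pos_right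
  have hgain : 0 ≤ r / G.degree a * (g (insert b T) - g T) := by
    have := hmin (insert b T)
    positivity
  have hloss : 1 / (G.degree b : ℝ) * (g (T.erase a) - g T) ≤ 0 := by linarith
  refine ⟨a, ha, le_antisymm ?_ (hmin _)⟩
  have := nonpos_of_mul_nonpos_right hloss (by positivity)
  linarith

theorem min_le_of_moranGenerator_nonpos {r : ℝ} (hr : 0 ≤ r) (hG : G.Preconnected)
    {g : Finset V → ℝ} (hg : ∀ S : Finset V, S ≠ ∅ → S ≠ univ → G.moranGenerator r g S ≤ 0)
    (S : Finset V) : min (g ∅) (g univ) ≤ g S := by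
  suffices h : ∀ T, (∀ S, g T ≤ g S) → min (g ∅) (g univ) ≤ g T by
    obtain ⟨T, -, hT⟩ := exists_min_image univ g univ_nonempty
    exact (h T fun S => hT S (mem_univ S)).trans (hT S (mem_univ S))
  intro T
  induction T using Finset.strongInduction with
  | H T ih =>
    intro hTmin
    by_cases hT : T = ∅
    · exact hT ▸ min_le_left _ _
    by_cases hTu : T = univ
    · exact hTu ▸ min_le_right _ _
    obtain ⟨a, ha, hga⟩ :=
      exists_erase_eq_of_moranGenerator_nonpos hr hG hT hTu hTmin (hg T hT hTu)
    rw [← hga]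
    exact ih _ (erase_ssubset ha) (hga ▸ hTmin)

end Moran

section Thermal

variable (G) [DecidableRel G.Adj]

noncomputable def thermalSubsolution (s : ℝ) (S : Finset V) : ℝ :=
  1 - ∏ u ∈ S, (G.degree u : ℝ) / (G.degree u + s)

variable {G}

@[simp]
theorem thermalSubsolution_empty (s : ℝ) : G.thermalSubsolution s ∅ = 0 := by
  simp [thermalSubsolution]

theorem thermalSubsolution_le_one {s : ℝ} (hs : 0 ≤ s) (S : Finset V) :
    G.thermalSubsolution s S ≤ 1 := by
  have : 0 ≤ ∏ u ∈ S, (G.degree u : ℝ) / (G.degree u + s) := prod_nonneg fun u _ => by positivity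
  rw [thermalSubsolution]
  linarith

theorem moranEdgeTerm_thermalSubsolution_nonneg [DecidableEq V] {r s : ℝ} (hs : 0 ≤ s)
    (hsr : ∀ u, s ≤ (r - 1) * G.degree u) {S : Finset V} {a b : V} (ha : a ∈ S) (hb : b ∉ S) :
    0 ≤ G.moranEdgeTerm r (G.thermalSubsolution s) S a b := by
  unfold moranEdgeTerm
  split_ifs with hab
  · have hda : (0 : ℝ) < G.degree a := Nat.cast_pos.2 hab.degree_pos_left
    have hdb : (0 : ℝ) < G.degree b := Nat.cast_pos.2 hab.degree_pos_right
    have hS : G.thermalSubsolution s S = 1 - G.degree a / (G.degree a + s) *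
        ∏ u ∈ S.erase a, (G.degree u : ℝ) / (G.degree u + s) := by
      rw [thermalSubsolution, ← mul_prod_erase S _ ha]
    have hins : G.thermalSubsolution s (insert b S) = 1 - G.degree b / (G.degree b + s) *
        (G.degree a / (G.degree a + s) * ∏ u ∈ S.erase a, (G.degree u : ℝ) / (G.degree u + s)) := by
      rw [thermalSubsolution, prod_insert hb, ← mul_prod_erase S _ ha]
    rw [hins, hS]
    exact thermal_edge_inequality hda hdb hs (prod_nonneg fun u _ => by positivity) (hsr b)
  · rfl

theorem moranGenerator_thermalSubsolution_nonneg [DecidableEq V] {r s : ℝ} (hs : 0 ≤ s)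
    (hsr : ∀ u, s ≤ (r - 1) * G.degree u) (S : Finset V) :
    0 ≤ G.moranGenerator r (G.thermalSubsolution s) S :=
  sum_nonneg fun _ ha => sum_nonneg fun _ hb =>
    moranEdgeTerm_thermalSubsolution_nonneg hs hsr ha (mem_compl.1 hb)

end Thermal

end SimpleGraph

open SimpleGraph

theorem IsFixation.moranGenerator_eq_zero {V : Type*} [Fintype V] [DecidableEq V]
    {G : SimpleGraph V} [DecidableRel G.Adj] {r : ℝ} {f : Finset V → ℝ} (hf : IsFixation G r f)
    {S : Finset V} (hS : S ≠ ∅) (hSu : S ≠ univ) : G.moranGenerator r f S = 0 := by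
  rw [moranGenerator_eq, ← hf.2.2.2 S hS hSu, sub_self]

theorem thermal_theorem_general {V : Type*} [Fintype V] [DecidableEq V]
    (G : SimpleGraph V) [DecidableRel G.Adj] (hconn : G.Connected)
    (r : ℝ) (hr : 1 < r) (f : Finset V → ℝ) (hf : IsFixation G r f) (v : V) :
    f {v} ≥ (r - 1) / (r + (G.degree v : ℝ) / (G.minDegree : ℝ)) := by
  have hf_empty : f ∅ = 0 := hf.2.1
  have hf_univ : f univ = 1 := hf.2.2.1
  rcases subsingleton_or_nontrivial V with _ | _
  · have hv : ({v} : Finset V) = univ :=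
      eq_univ_of_forall fun w => mem_singleton.2 (Subsingleton.elim w v)
    have : 0 ≤ (G.degree v : ℝ) / G.minDegree := by positivity
    rw [hv, hf_univ, ge_iff_le, div_le_one (by positivity)]
    linarith
  have hδ : 0 < (G.minDegree : ℝ) := Nat.cast_pos.2 hconn.preconnected.minDegree_pos_of_nontrivial
  set s := (r - 1) * (G.minDegree : ℝ)
  have hs : 0 ≤ s := mul_nonneg (by linarith) hδ.le
  have hsr (u : V) : s ≤ (r - 1) * G.degree u :=
    mul_le_mul_of_nonneg_left (Nat.cast_le.2 (G.minDegree_le_degree u)) (by linarith)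
  have hgen (S : Finset V) (hS : S ≠ ∅) (hSu : S ≠ univ) :
      G.moranGenerator r (f - G.thermalSubsolution s) S ≤ 0 := by
    rw [moranGenerator_sub, hf.moranGenerator_eq_zero hS hSu, zero_sub, neg_nonpos]
    exact moranGenerator_thermalSubsolution_nonneg hs hsr S
  have hboundary : 0 ≤ min ((f - G.thermalSubsolution s) ∅) ((f - G.thermalSubsolution s) .univ) :=
    le_min (by simp [hf_empty])
      (sub_nonneg.2 ((thermalSubsolution_le_one hs _).trans_eq hf_univ.symm))
  calc (r - 1) / (r + (G.degree v : ℝ) / (G.minDegree : ℝ))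
      ≤ 1 - G.degree v / (G.degree v + s) :=
        sub_one_div_add_div_le_one_sub_div hr (by positivity) hδ
    _ = G.thermalSubsolution s {v} := by simp [thermalSubsolution]
    _ ≤ f {v} := sub_nonneg.1 <| hboundary.trans <|
      min_le_of_moranGenerator_nonpos (by linarith) hconn.preconnected hgen {v}

/-- **Thermal Theorem**: for any connected undirected graph `G` and any `r > 1`, the
fixation probability of any vertex `v` is at least `(r-1)/(r + deg v / δ(G))`. -/
theorem thermal_theorem {V : Type*} [Fintype V] [DecidableEq V] [Nonempty V]
    (G : SimpleGraph V) [DecidableRel G.Adj] (hconn : G.Connected)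
    (r : ℝ) (hr : 1 < r) (f : Finset V → ℝ) (hf : IsFixation G r f) (v : V) :
    f {v} ≥ (r - 1) / (r + (G.degree v : ℝ) / (G.minDegree : ℝ)) :=
  thermal_theorem_general G hconn r hr f hf v
end

section
/- Let G=(V,E) be a finite connected undirected simple graph on n vertices, let r > 1 be real, and let f be the fixation function for the generalized Moran process on G with fitness r. Then f_r(G) = (1/n)·Σ_{v∈V} f({v}) ≥ (r−1)/(r + Δ(G)/δ(G)), where Δ(G) and δ(G) denote the maximum and minimum degree of G respectively. -/
/-- The piecewise-linear interpolation of `t ↦ r ^ t` between consecutive integers. -/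
noncomputable def powInterp (r ψ : ℝ) : ℝ :=
  r ^ ⌊ψ⌋ * (1 + (r - 1) * Int.fract ψ)

theorem powInterp_intCast_add (r : ℝ) (k : ℤ) {s : ℝ} (hs₀ : 0 ≤ s) (hs₁ : s < 1) :
    powInterp r (k + s) = r ^ k * (1 + (r - 1) * s) := by
  rw [powInterp, Int.floor_intCast_add, Int.fract_intCast_add, Int.floor_eq_zero_iff.2 ⟨hs₀, hs₁⟩,
    Int.fract_eq_self.2 ⟨hs₀, hs₁⟩, add_zero]

theorem powInterp_of_mem_Icc (r : ℝ) {ψ : ℝ} (h₀ : 0 ≤ ψ) (h₁ : ψ ≤ 1) :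
    powInterp r ψ = 1 + (r - 1) * ψ := by
  rcases h₁.lt_or_eq with h₁ | rfl
  · simpa using powInterp_intCast_add r 0 h₀ h₁
  · simpa using powInterp_intCast_add r 1 le_rfl one_pos

theorem powInterp_pos {r : ℝ} (hr : 0 < r) (ψ : ℝ) : 0 < powInterp r ψ := by
  have := Int.fract_nonneg ψ
  have := Int.fract_lt_one ψ
  unfold powInterp
  have : 0 < 1 + (r - 1) * Int.fract ψ := by nlinarith
  positivity

/-- The inequality behind `powInterp_step`, with `r ^ (⌊ψ⌋ - 1)` factored out of the values
`a`, `r * (1 + (r - 1) * s)`, `c` of `powInterp r` at `ψ - x`, `ψ`, `ψ + y`. -/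
theorem powInterp_step_normalized {r x y s a c : ℝ} (hr : 1 ≤ r) (hx₀ : 0 ≤ x) (hx₁ : x ≤ 1)
    (hy₀ : 0 ≤ y) (hy₁ : y ≤ 1) (hs₀ : 0 ≤ s)
    (ha : x ≤ s ∧ a = r * (1 + (r - 1) * (s - x)) ∨ s < x ∧ a = 1 + (r - 1) * (s + 1 - x))
    (hc : s + y < 1 ∧ c = r * (1 + (r - 1) * (s + y)) ∨
      1 ≤ s + y ∧ c = r ^ 2 * (1 + (r - 1) * (s + y - 1))) :
    y * (r * (1 + (r - 1) * s) - a) * c ≤ r * x * (c - r * (1 + (r - 1) * s)) * a := by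
  have hρ : 0 ≤ r - 1 := by linarith
  have hr₀ : 0 ≤ r := by linarith
  -- In each case the difference of the two sides is a nonnegative multiple of `key`.
  rcases ha with ⟨hxs, rfl⟩ | ⟨hxs, rfl⟩ <;> rcases hc with ⟨hsy, rfl⟩ | ⟨hsy, rfl⟩
  · have key : 0 ≤ (r - 1) * (1 - x - y) + (r - 1) ^ 2 * (s - x) := by
      have : 0 ≤ 1 - x - y := by linarith
      have : 0 ≤ s - x := by linarith
      positivity
    nlinarith [mul_nonneg (mul_nonneg (mul_nonneg (mul_nonneg hx₀ hy₀) hρ) (sq_nonneg r)) key]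
  · have key : 0 ≤ (y + (r - 1) * (s + y - 1)) * ((r - 1) * (s - x))
        + (r - 1) * (s + y - 1) * (1 - y) := by
      have : 0 ≤ s + y - 1 := by linarith
      have : 0 ≤ s - x := by linarith
      have : 0 ≤ 1 - y := by linarith
      positivity
    nlinarith [mul_nonneg (mul_nonneg (mul_nonneg hx₀ hρ) (pow_nonneg hr₀ 3)) key]
  · have key : 0 ≤ ((r - 1) * s + x) * (r - 1) * (1 - s - y)
        + r * (r - 1) * (x - s) * (1 - x) := by
      have : 0 ≤ 1 - s - y := by linarith
      have : 0 ≤ x - s := by linarith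
      have : 0 ≤ 1 - x := by linarith
      positivity
    nlinarith [mul_nonneg (mul_nonneg (mul_nonneg hy₀ hρ) hr₀) key]
  · have hQ₁ : 0 ≤ (1 - x) * y * (x + y - 1) - (s + y - 1) * (y - x) := by
      rcases le_or_gt y x with hyx | hyx
      · nlinarith [mul_nonneg (mul_nonneg (by linarith : (0:ℝ) ≤ 1 - x) hy₀)
          (by linarith : (0:ℝ) ≤ x + y - 1), mul_nonneg (by linarith : (0:ℝ) ≤ s + y - 1)
          (by linarith : (0:ℝ) ≤ x - y)]
      · nlinarith [mul_nonneg (mul_nonneg hx₀ (by linarith : (0:ℝ) ≤ x + y - 1))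
          (by linarith : (0:ℝ) ≤ 1 - y), mul_nonneg (by linarith : (0:ℝ) ≤ x - s)
          (by linarith : (0:ℝ) ≤ y - x)]
    have hQ₂ : 0 ≤ (s + y - 1) * ((1 - x) * (x - s) + (1 - y) * s) := by
      have : 0 ≤ s + y - 1 := by linarith
      have : 0 ≤ x - s := by linarith
      have : 0 ≤ 1 - x := by linarith
      have : 0 ≤ 1 - y := by linarith
      positivity
    have key : 0 ≤ (r - 1) * ((1 - x) * y * (x + y - 1) - (s + y - 1) * (y - x))
        + (r - 1) ^ 2 * ((s + y - 1) * ((1 - x) * (x - s) + (1 - y) * s)) := by positivity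
    nlinarith [mul_nonneg (mul_nonneg (pow_nonneg hr₀ 2) hρ) key]

theorem powInterp_step {r x y : ℝ} (hr : 1 ≤ r) (hx₀ : 0 ≤ x) (hx₁ : x ≤ 1)
    (hy₀ : 0 ≤ y) (hy₁ : y ≤ 1) (ψ : ℝ) :
    y * (powInterp r ψ - powInterp r (ψ - x)) * powInterp r (ψ + y)
      ≤ r * x * (powInterp r (ψ + y) - powInterp r ψ) * powInterp r (ψ - x) := by
  obtain ⟨k, s, hs₀, hs₁, rfl⟩ : ∃ (k : ℤ) (s : ℝ), 0 ≤ s ∧ s < 1 ∧ ψ = k + s :=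
    ⟨⌊ψ⌋, Int.fract ψ, Int.fract_nonneg ψ, Int.fract_lt_one ψ, (Int.floor_add_fract ψ).symm⟩
  have hr₀ : r ≠ 0 := by positivity
  set R := r ^ (k - 1)
  have hk : r ^ k = R * r := by rw [← zpow_add_one₀ hr₀, sub_add_cancel]
  have hk₁ : r ^ (k + 1) = R * r ^ 2 := by rw [zpow_add_one₀ hr₀, hk]; ring
  have hb : powInterp r (k + s) = R * (r * (1 + (r - 1) * s)) := by
    rw [powInterp_intCast_add r k hs₀ hs₁, hk, mul_assoc]
  obtain ⟨a, ha, hxa⟩ : ∃ a, powInterp r (k + s - x) = R * a ∧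
      (x ≤ s ∧ a = r * (1 + (r - 1) * (s - x)) ∨ s < x ∧ a = 1 + (r - 1) * (s + 1 - x)) := by
    rcases le_or_gt x s with hxs | hxs
    · refine ⟨_, ?_, .inl ⟨hxs, rfl⟩⟩
      rw [add_sub_assoc, powInterp_intCast_add r k (by linarith) (by linarith), hk, mul_assoc]
    · refine ⟨_, ?_, .inr ⟨hxs, rfl⟩⟩
      rw [show (k : ℝ) + s - x = ((k - 1 : ℤ) : ℝ) + (s + 1 - x) by push_cast; ring,
        powInterp_intCast_add r _ (by linarith) (by linarith)]
  obtain ⟨c, hc, hyc⟩ : ∃ c, powInterp r (k + s + y) = R * c ∧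
      (s + y < 1 ∧ c = r * (1 + (r - 1) * (s + y)) ∨
        1 ≤ s + y ∧ c = r ^ 2 * (1 + (r - 1) * (s + y - 1))) := by
    rcases lt_or_ge (s + y) 1 with hsy | hsy
    · refine ⟨_, ?_, .inl ⟨hsy, rfl⟩⟩
      rw [add_assoc, powInterp_intCast_add r k (by linarith) hsy, hk, mul_assoc]
    · refine ⟨_, ?_, .inr ⟨hsy, rfl⟩⟩
      rw [show (k : ℝ) + s + y = ((k + 1 : ℤ) : ℝ) + (s + y - 1) by push_cast; ring,
        powInterp_intCast_add r _ (by linarith) (by linarith), hk₁, mul_assoc]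
  rw [hb, ha, hc]
  nlinarith [mul_le_mul_of_nonneg_left
    (powInterp_step_normalized hr hx₀ hx₁ hy₀ hy₁ hs₀ hxa hyc) (sq_nonneg R)]

theorem inv_powInterp_step {r x y : ℝ} (hr : 1 ≤ r) (hx₀ : 0 ≤ x) (hx₁ : x ≤ 1)
    (hy₀ : 0 ≤ y) (hy₁ : y ≤ 1) (ψ : ℝ) :
    y * ((powInterp r (ψ - x))⁻¹ - (powInterp r ψ)⁻¹)
      ≤ r * x * ((powInterp r ψ)⁻¹ - (powInterp r (ψ + y))⁻¹) := by
  have ha := powInterp_pos (by positivity) (ψ - x)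
  have hb := powInterp_pos (by positivity) ψ
  have hc := powInterp_pos (by positivity) (ψ + y)
  rw [inv_sub_inv ha.ne' hb.ne', inv_sub_inv hb.ne' hc.ne', mul_div_assoc', mul_div_assoc',
    div_le_div_iff₀ (by positivity) (by positivity)]
  nlinarith [mul_le_mul_of_nonneg_left (powInterp_step hr hx₀ hx₁ hy₀ hy₁ ψ) hb.le]

open Finset

theorem SimpleGraph.Connected.exists_adj_mem_notMem {V : Type*} {G : SimpleGraph V}
    (hconn : G.Connected) {T : Finset V} (hT : T.Nonempty) (hTU : ∃ b, b ∉ T) :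
    ∃ a ∈ T, ∃ b ∉ T, G.Adj a b := by
  obtain ⟨a, ha⟩ := hT
  obtain ⟨b, hb⟩ := hTU
  obtain ⟨d, -, hd₁, hd₂⟩ := (hconn.preconnected a b).some.exists_boundary_dart (T : Set V) ha hb
  exact ⟨d.fst, hd₁, d.snd, hd₂, d.adj⟩

section Moran

variable {V : Type*} [Fintype V] [DecidableEq V] (G : SimpleGraph V) [DecidableRel G.Adj]

noncomputable def moranEdgeDrift (r : ℝ) (h : Finset V → ℝ) (S : Finset V) (a b : V) : ℝ :=
  r / G.degree a * (h (insert b S) - h S) + 1 / G.degree b * (h (S.erase a) - h S)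

/-- The generator of the Moran process applied to `h` at `S`: across an edge `ab` with
`a ∈ S`, `b ∉ S`, the mutant `a` replaces `b` at rate `r / deg a` and `b` replaces `a` at
rate `1 / deg b`. -/
noncomputable def moranDrift (r : ℝ) (h : Finset V → ℝ) (S : Finset V) : ℝ :=
  ∑ a ∈ S, ∑ b ∈ Sᶜ, if G.Adj a b then moranEdgeDrift G r h S a b else 0

variable {G}

theorem IsFixation.moranDrift_eq_zero {r : ℝ} {f : Finset V → ℝ} (hf : IsFixation G r f)
    {S : Finset V} (hS : S ≠ ∅) (hSU : S ≠ univ) : moranDrift G r f S = 0 := by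
  rw [← sub_eq_zero.2 (hf.2.2.2 S hS hSU).symm, moranDrift]
  simp only [moranEdgeDrift, mul_sum, ← sum_sub_distrib]
  refine sum_congr rfl fun a _ => sum_congr rfl fun b _ => ?_
  split_ifs <;> ring

theorem moranDrift_sub (r : ℝ) (f g : Finset V → ℝ) (S : Finset V) :
    moranDrift G r (f - g) S = moranDrift G r f S - moranDrift G r g S := by
  simp only [moranDrift, moranEdgeDrift, Pi.sub_apply, ← sum_sub_distrib]
  refine sum_congr rfl fun a _ => sum_congr rfl fun b _ => ?_
  split_ifs <;> ring

/-- At a minimum of `h` every edge drift is nonnegative, so a nonpositive total drift forces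
each of them to vanish. -/
theorem apply_erase_eq_of_forall_le {r : ℝ} (hr : 0 ≤ r) {h : Finset V → ℝ} {T : Finset V}
    (hmin : ∀ U, h T ≤ h U) (hdrift : moranDrift G r h T ≤ 0) {a b : V} (ha : a ∈ T)
    (hb : b ∉ T) (hab : G.Adj a b) : h (T.erase a) = h T := by
  have hterm : ∀ a' ∈ T, ∀ b' ∈ Tᶜ,
      0 ≤ if G.Adj a' b' then moranEdgeDrift G r h T a' b' else 0 := by
    intro a' _ b' _
    split_ifs
    · exact add_nonneg (mul_nonneg (by positivity) (sub_nonneg.2 (hmin _)))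
        (mul_nonneg (by positivity) (sub_nonneg.2 (hmin _)))
    · exact le_rfl
  have hzero := (sum_eq_zero_iff_of_nonneg fun a' ha' => sum_nonneg (hterm a' ha')).1
    (hdrift.antisymm (sum_nonneg fun a' ha' => sum_nonneg (hterm a' ha'))) a ha
  have hab_zero := (sum_eq_zero_iff_of_nonneg (hterm a ha)).1 hzero b (mem_compl.2 hb)
  rw [if_pos hab, moranEdgeDrift] at hab_zero
  have hdeg : (0 : ℝ) < 1 / G.degree b :=
    one_div_pos.2 (Nat.cast_pos.2 (G.degree_pos_iff_exists_adj b |>.2 ⟨a, hab.symm⟩))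
  have hins := mul_nonneg (by positivity : (0 : ℝ) ≤ r / G.degree a)
    (sub_nonneg.2 (hmin (insert b T)))
  nlinarith [hmin (T.erase a)]

theorem nonneg_of_moranDrift_nonpos (hconn : G.Connected) {r : ℝ} (hr : 0 ≤ r)
    {h : Finset V → ℝ} (h_empty : 0 ≤ h ∅) (h_univ : 0 ≤ h univ)
    (hdrift : ∀ S, S ≠ ∅ → S ≠ univ → moranDrift G r h S ≤ 0) (S : Finset V) : 0 ≤ h S := by
  obtain ⟨S₀, -, hS₀⟩ := exists_min_image univ h ⟨∅, mem_univ _⟩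
  suffices ∀ T, h T = h S₀ → 0 ≤ h T from (this S₀ rfl).trans (hS₀ S (mem_univ S))
  intro T
  induction T using Finset.strongInduction with
  | H T ih =>
    intro hT
    have hmin : ∀ U, h T ≤ h U := fun U => hT ▸ hS₀ U (mem_univ U)
    rcases T.eq_empty_or_nonempty with rfl | hne
    · exact h_empty
    by_cases hTU : T = univ
    · exact hTU ▸ h_univ
    obtain ⟨a, ha, b, hb, hab⟩ := hconn.exists_adj_mem_notMem hne
      (by simpa [eq_univ_iff_forall] using hTU)
    have herase := apply_erase_eq_of_forall_le hr hmin (hdrift T hne.ne_empty hTU) ha hb hab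
    exact herase ▸ ih (T.erase a) (erase_ssubset ha) (herase.trans hT)

end Moran

section Subsolution

variable {V : Type*} [Fintype V] (G : SimpleGraph V) [DecidableRel G.Adj]

noncomputable def fixationSubsolution (r : ℝ) (S : Finset V) : ℝ :=
  1 - (powInterp r (∑ v ∈ S, (G.minDegree : ℝ) / G.degree v))⁻¹

variable {G}

theorem fixationSubsolution_empty (r : ℝ) : fixationSubsolution G r ∅ = 0 := by
  simp [fixationSubsolution, powInterp_of_mem_Icc r le_rfl zero_le_one]

theorem fixationSubsolution_le_one {r : ℝ} (hr : 0 < r) (S : Finset V) :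
    fixationSubsolution G r S ≤ 1 :=
  sub_le_self _ (inv_nonneg.2 (powInterp_pos hr _).le)

theorem div_le_fixationSubsolution_singleton {r : ℝ} (hr : 1 ≤ r) (hδ : 0 < G.minDegree)
    (v : V) : (r - 1) / (r + G.maxDegree / G.minDegree) ≤ fixationSubsolution G r {v} := by
  have hδ' : (0 : ℝ) < G.minDegree := Nat.cast_pos.2 hδ
  have hdeg : (G.minDegree : ℝ) ≤ G.degree v := Nat.cast_le.2 (G.minDegree_le_degree v)
  have hΔ : (G.degree v : ℝ) ≤ G.maxDegree := Nat.cast_le.2 (G.degree_le_maxDegree v)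
  have hx : (G.minDegree : ℝ) / G.degree v ≤ 1 := (div_le_one (hδ'.trans_le hdeg)).2 hdeg
  rw [fixationSubsolution, sum_singleton, powInterp_of_mem_Icc r (by positivity) hx]
  calc (r - 1) / (r + G.maxDegree / G.minDegree)
      = (r - 1) * G.minDegree / (G.maxDegree + r * G.minDegree) := by field_simp; ring
    _ ≤ (r - 1) * G.minDegree / (G.degree v + (r - 1) * G.minDegree) :=
        div_le_div_of_nonneg_left (by nlinarith) (by nlinarith) (by nlinarith)
    _ = 1 - (1 + (r - 1) * (G.minDegree / G.degree v))⁻¹ := by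
        have hd : (0 : ℝ) < G.degree v := hδ'.trans_le hdeg
        have : (0 : ℝ) < G.degree v + (r - 1) * G.minDegree := by nlinarith
        rw [show 1 + (r - 1) * (G.minDegree / G.degree v : ℝ)
          = (G.degree v + (r - 1) * G.minDegree) / G.degree v by field_simp, inv_div]
        field_simp
        ring

variable [DecidableEq V]

theorem moranEdgeDrift_fixationSubsolution_nonneg {r : ℝ} (hr : 1 ≤ r) (hδ : 0 < G.minDegree)
    {S : Finset V} {a b : V} (ha : a ∈ S) (hb : b ∉ S) :
    0 ≤ moranEdgeDrift G r (fixationSubsolution G r) S a b := by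
  have hδ' : (0 : ℝ) < G.minDegree := Nat.cast_pos.2 hδ
  have hdeg (v : V) : (0 : ℝ) < G.degree v :=
    Nat.cast_pos.2 (hδ.trans_le (G.minDegree_le_degree v))
  set x : V → ℝ := fun v => (G.minDegree : ℝ) / G.degree v
  have hx : ∀ v, 0 ≤ x v ∧ x v ≤ 1 := fun v =>
    ⟨by positivity, (div_le_one (hdeg v)).2 (Nat.cast_le.2 (G.minDegree_le_degree v))⟩
  set ψ := ∑ v ∈ S, x v
  have hins : ∑ v ∈ insert b S, x v = ψ + x b := by rw [sum_insert hb, add_comm]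
  have hera : ∑ v ∈ S.erase a, x v = ψ - x a := eq_sub_of_add_eq (sum_erase_add S x ha)
  have hdrift : moranEdgeDrift G r (fixationSubsolution G r) S a b
      = (r * x a * ((powInterp r ψ)⁻¹ - (powInterp r (ψ + x b))⁻¹)
        - x b * ((powInterp r (ψ - x a))⁻¹ - (powInterp r ψ)⁻¹)) / G.minDegree := by
    simp only [moranEdgeDrift, fixationSubsolution, hins, hera, x, ψ]
    field_simp
    ring
  rw [hdrift]
  exact div_nonneg (sub_nonneg.2 (inv_powInterp_step hr (hx a).1 (hx a).2 (hx b).1 (hx b).2 ψ))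
    hδ'.le

theorem IsFixation.fixationSubsolution_le (hconn : G.Connected) {r : ℝ} (hr : 1 ≤ r)
    (hδ : 0 < G.minDegree) {f : Finset V → ℝ} (hf : IsFixation G r f) (S : Finset V) :
    fixationSubsolution G r S ≤ f S := by
  have hdrift (S : Finset V) : 0 ≤ moranDrift G r (fixationSubsolution G r) S :=
    sum_nonneg fun a ha => sum_nonneg fun b hb => by
      split_ifs
      · exact moranEdgeDrift_fixationSubsolution_nonneg hr hδ ha (mem_compl.1 hb)
      · exact le_rfl
  refine sub_nonneg.1 (nonneg_of_moranDrift_nonpos hconn (by linarith)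
    (h := f - fixationSubsolution G r) ?_ ?_ (fun T hT hTU => ?_) S)
  · simp [hf.2.1, fixationSubsolution_empty]
  · simpa [hf.2.2.1] using fixationSubsolution_le_one (by linarith) _
  · rw [moranDrift_sub, hf.moranDrift_eq_zero hT hTU]
    linarith [hdrift T]

theorem IsFixation.div_le_singleton (hconn : G.Connected) {r : ℝ} (hr : 1 ≤ r)
    {f : Finset V → ℝ} (hf : IsFixation G r f) (v : V) :
    (r - 1) / (r + G.maxDegree / G.minDegree) ≤ f {v} := by
  rcases subsingleton_or_nontrivial V with hV | hV
  · rw [eq_univ_of_forall fun w => mem_singleton.2 (Subsingleton.elim w v), hf.2.2.1]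
    exact div_le_one_of_le₀ (by linarith [show (0 : ℝ) ≤ G.maxDegree / G.minDegree by positivity])
      (by positivity)
  · exact (div_le_fixationSubsolution_singleton hr hconn.preconnected.minDegree_pos_of_nontrivial
      v).trans (hf.fixationSubsolution_le hconn hr hconn.preconnected.minDegree_pos_of_nontrivial _)

end Subsolution

/-- The fixation probability of any connected undirected graph `G` with fitness `r > 1`
is at least `(r-1)/(r + Δ(G)/δ(G))`. -/
theorem fixation_graph_lower_bound {V : Type*} [Fintype V] [DecidableEq V] [Nonempty V]
    (G : SimpleGraph V) [DecidableRel G.Adj] (hconn : G.Connected)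
    (r : ℝ) (hr : 1 < r) (f : Finset V → ℝ) (hf : IsFixation G r f) :
    (1 / (Fintype.card V : ℝ)) * ∑ v : V, f {v}
      ≥ (r - 1) / (r + (G.maxDegree : ℝ) / (G.minDegree : ℝ)) := by
  have hn : (0 : ℝ) < Fintype.card V := Nat.cast_pos.2 Fintype.card_pos
  rw [ge_iff_le, one_div, ← div_eq_inv_mul, le_div_iff₀ hn]
  calc (r - 1) / (r + G.maxDegree / G.minDegree) * Fintype.card V
      = ∑ _v : V, (r - 1) / (r + G.maxDegree / G.minDegree) := by simp [mul_comm]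
    _ ≤ ∑ v : V, f {v} := sum_le_sum fun v _ => hf.div_le_singleton hconn hr.le v
end

section
/- There exists an absolute constant m₀ ∈ ℕ such that for every real r > 1, all integers m ≥ m₀ and φ with φ ≥ max(4, 2r), every φ-urchin graph G with clique size m, every clique vertex v ∈ K, and the fixation function f of the generalized Moran process on G with fitness r, it holds that f({v}) < 5rφ/m. (Hence, for φ(n)=ω(1) with φ(n) ≤ √n, the clique vertices — an m = |V(G)|/(φ+1) fraction of the vertices — have fixation probability O(r·φ/m), making the φ(n)-urchin graphs selective suppressors.) -/
lemma urchin_arith (r p m k c M : ℝ) (hr : 1 < r) (h2r : 2*r ≤ p)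
    (hp1 : 1 ≤ p) (hk : 1 ≤ k) (hkm : k ≤ m) (hc : c = 2*r*p/m)
    (hck : c*k ≤ 1) (hM : M ≤ c*k + c) (hM0 : 0 ≤ M) :
    (m-k)*(r/(m-1+p^2)*M + 1/(m-1+p^2)*(c*(k-1)))
      + p^2*(r/(m-1+p^2)*1 + 1/p*(c*(k-1)))
    ≤ c*k*((m-k)*(r/(m-1+p^2)+1/(m-1+p^2)) + p^2*(r/(m-1+p^2)+1/p)) := by
  have hm1 : 1 ≤ m := le_trans hk hkm
  have hm0 : 0 < m := lt_of_lt_of_le one_pos hm1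
  have hp0 : 0 < p := lt_of_lt_of_le one_pos hp1
  have hr0 : 0 < r := lt_trans one_pos hr
  have hp2 : 1 ≤ p^2 := by nlinarith
  have hD0 : 0 < m - 1 + p^2 := by linarith
  set D := m - 1 + p^2 with hD
  have hc0 : 0 < c := by rw [hc]; positivity
  have hmD : m ≤ D := by simp only [hD]; linarith
  have h4 : 0 ≤ (m-k)/D := div_nonneg (by linarith) hD0.le
  have L1 : (m-k)*(r/D*M + 1/D*(c*(k-1)))
      ≤ c*k*(m-k)*(r/D+1/D) + c*(r-1)*((m-k)/D) := by
    have h1 : r*M + c*(k-1) ≤ c*k*(r+1) + c*(r-1) := by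
      have := mul_le_mul_of_nonneg_left hM hr0.le
      nlinarith
    have h2 : (m-k)*(r/D*M + 1/D*(c*(k-1))) = (m-k)/D*(r*M + c*(k-1)) := by
      field_simp; try ring
    have h3 : c*k*(m-k)*(r/D+1/D) + c*(r-1)*((m-k)/D)
        = (m-k)/D*(c*k*(r+1) + c*(r-1)) := by field_simp; try ring
    rw [h2, h3]
    exact mul_le_mul_of_nonneg_left h1 h4
  have L2 : p^2*(r/D*1 + 1/p*(c*(k-1)))
      ≤ c*k*(p^2*(r/D + 1/p)) + (r*p^2/D - c*p) := by
    have e1 : p^2*(r/D*1 + 1/p*(c*(k-1))) = r*p^2/D + p*c*(k-1) := by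
      field_simp; try ring
    have e2 : c*k*(p^2*(r/D + 1/p)) = c*k*r*(p^2/D) + c*k*p := by
      field_simp; try ring
    rw [e1, e2]
    have h8 : 0 ≤ c*k*r*(p^2/D) := by positivity
    have h9 : p*c*(k-1) = c*k*p - c*p := by ring
    linarith
  have L3 : c*(r-1)*((m-k)/D) + (r*p^2/D - c*p) ≤ 0 := by
    have h5 : (m-k)/D ≤ 1 := by
      rw [div_le_one hD0]; linarith
    have h6 : c*(r-1)*((m-k)/D) ≤ c*(r-1) := by
      have := mul_le_mul_of_nonneg_left h5 (by nlinarith : (0:ℝ) ≤ c*(r-1))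
      linarith [this]
    have h7 : r*p^2/D ≤ c*p/2 := by
      have e : c*p/2 = r*p^2/m := by rw [hc]; field_simp; try ring
      rw [e]
      exact div_le_div_of_nonneg_left (by positivity) hm0 hmD
    have h10 : c*(r-1) ≤ c*(p/2 - 1) := by
      have : r - 1 ≤ p/2 - 1 := by linarith
      exact mul_le_mul_of_nonneg_left this hc0.le
    nlinarith
  linarith


set_option maxHeartbeats 2000000 in
/-- In a `φ`-urchin graph with clique size `m` (clique `K` of `m` vertices, independent
set `I` of `m·φ` vertices, every vertex of `I` with exactly `φ` neighbours in `K` and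
every vertex of `K` with exactly `φ²` neighbours in `I`), every clique vertex `v` has
fixation probability less than `5·r·φ/m`, provided `m` is large enough (uniformly) and
`φ ≥ max (4, 2r)`. -/
theorem phi_urchin_clique_fixation_upper_bound :
    ∃ m₀ : ℕ, ∀ r : ℝ, 1 < r → ∀ m φ : ℕ, m₀ ≤ m → max 4 (2 * r) ≤ (φ : ℝ) →
      ∀ (V : Type) [Fintype V] [DecidableEq V]
        (G : SimpleGraph V) [DecidableRel G.Adj] (K I : Finset V),
        K.card = m → I.card = m * φ → Disjoint K I → K ∪ I = Finset.univ →
        (∀ a ∈ K, ∀ b ∈ K, a ≠ b → G.Adj a b) →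
        (∀ a ∈ I, ∀ b ∈ I, ¬ G.Adj a b) →
        (∀ w ∈ I, (K.filter (G.Adj w)).card = φ) →
        (∀ v ∈ K, (I.filter (G.Adj v)).card = φ ^ 2) →
        ∀ f : Finset V → ℝ, IsFixation G r f →
        ∀ v ∈ K, f {v} < 5 * r * (φ : ℝ) / (m : ℝ) := by
  refine ⟨1, ?_⟩
  intro r hr m φ hm hφ V _ _ G _ K I hK hI hKI huniv hKK hII hIdeg hKdeg f hfix v hv
  have hφ4 : (4:ℝ) ≤ (φ:ℝ) := le_trans (le_max_left _ _) hφ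
  have h2r : 2*r ≤ (φ:ℝ) := le_trans (le_max_right _ _) hφ
  have hr0 : (0:ℝ) < r := lt_trans one_pos hr
  have hm1 : 1 ≤ m := hm
  have hmR : (1:ℝ) ≤ (m:ℝ) := by exact_mod_cast hm1
  have hm0R : (0:ℝ) < (m:ℝ) := by linarith
  have hφ1n : 1 ≤ φ := by exact_mod_cast le_trans (by norm_num : (1:ℝ) ≤ 4) hφ4
  have hφ0R : (0:ℝ) < (φ:ℝ) := by linarith
  set c : ℝ := 2*r*(φ:ℝ)/(m:ℝ) with hc
  have hc0 : 0 < c := by rw [hc]; positivity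
  -- membership basics
  have hKIv : ∀ b : V, b ∈ K ∨ b ∈ I := by
    intro b
    have : b ∈ K ∪ I := huniv ▸ Finset.mem_univ b
    exact Finset.mem_union.mp this
  have hInotK : ∀ b ∈ I, b ∉ K := fun b hb hbK =>
    Finset.disjoint_left.mp hKI hbK hb
  -- degrees
  have hdK : ∀ a ∈ K, (G.degree a : ℝ) = (m:ℝ) - 1 + (φ:ℝ)^2 := by
    intro a ha
    have hnb : G.neighborFinset a = K.erase a ∪ I.filter (G.Adj a) := by
      ext b
      simp only [SimpleGraph.mem_neighborFinset, Finset.mem_union, Finset.mem_erase,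
        Finset.mem_filter]
      constructor
      · intro hab
        rcases hKIv b with hb | hb
        · exact Or.inl ⟨(G.ne_of_adj hab).symm, hb⟩
        · exact Or.inr ⟨hb, hab⟩
      · rintro (⟨hba, hb⟩ | ⟨hb, hab⟩)
        · exact hKK a ha b hb (Ne.symm hba)
        · exact hab
    have hdisj : Disjoint (K.erase a) (I.filter (G.Adj a)) :=
      (hKI.mono_left (Finset.erase_subset a K)).mono_right (Finset.filter_subset _ _)
    have hcard : G.degree a = (m - 1) + φ^2 := by
      rw [SimpleGraph.degree, hnb, Finset.card_union_of_disjoint hdisj,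
        Finset.card_erase_of_mem ha, hK, hKdeg a ha]
    rw [hcard]
    push_cast [Nat.cast_sub hm1]
    ring
  have hdI : ∀ w ∈ I, (G.degree w : ℝ) = (φ:ℝ) := by
    intro w hw
    have hnb : G.neighborFinset w = K.filter (G.Adj w) := by
      ext b
      simp only [SimpleGraph.mem_neighborFinset, Finset.mem_filter]
      constructor
      · intro hab
        rcases hKIv b with hb | hb
        · exact ⟨hb, hab⟩
        · exact absurd hab (hII w hw b hb)
      · exact fun hb => hb.2
    have : G.degree w = φ := by rw [SimpleGraph.degree, hnb, hIdeg w hw]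
    exact_mod_cast congrArg Nat.cast this
  -- the supersolution function
  set h : Finset V → ℝ :=
    fun T => if (T ∩ I).Nonempty then 1 else min 1 (c * (T.card : ℝ)) with hh
  have hle1 : ∀ T, h T ≤ 1 := by
    intro T; rw [hh]; dsimp only; split
    · exact le_refl 1
    · exact min_le_left _ _
  have hnn : ∀ T, 0 ≤ h T := by
    intro T; rw [hh]; dsimp only; split
    · exact zero_le_one
    · exact le_min zero_le_one (by positivity)
  have hIne : I.Nonempty := by
    rw [← Finset.card_pos, hI]; exact Nat.mul_pos (lt_of_lt_of_le one_pos hm1) hφ1n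
  have hhuniv : h Finset.univ = 1 := by
    rw [hh]; dsimp only
    rw [if_pos]
    rwa [Finset.univ_inter]
  have hhempty : h ∅ = 0 := by
    rw [hh]; dsimp only
    rw [if_neg (by simp), Finset.card_empty]
    norm_num
  have hsuper : ∀ S : Finset V, S ≠ ∅ → S ≠ Finset.univ →
      (∑ a ∈ S, ∑ b ∈ Sᶜ,
        (if G.Adj a b then r / (G.degree a : ℝ) * h (insert b S)
          + 1 / (G.degree b : ℝ) * h (S.erase a) else 0))
      ≤ h S * ∑ a ∈ S, ∑ b ∈ Sᶜ,
        (if G.Adj a b then r / (G.degree a : ℝ) + 1 / (G.degree b : ℝ) else 0) := by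
    intro S hS0 hSu
    by_cases hone : h S = 1
    · rw [hone, one_mul]
      refine Finset.sum_le_sum fun a _ => Finset.sum_le_sum fun b _ => ?_
      split
      · next hab =>
        have h1 : 0 ≤ r / (G.degree a : ℝ) := div_nonneg hr0.le (Nat.cast_nonneg _)
        have h2 : 0 ≤ 1 / (G.degree b : ℝ) := div_nonneg zero_le_one (Nat.cast_nonneg _)
        calc r / (G.degree a : ℝ) * h (insert b S) + 1 / (G.degree b : ℝ) * h (S.erase a)
            ≤ r / (G.degree a : ℝ) * 1 + 1 / (G.degree b : ℝ) * 1 :=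
              add_le_add (mul_le_mul_of_nonneg_left (hle1 _) h1)
                (mul_le_mul_of_nonneg_left (hle1 _) h2)
          _ = _ := by ring
      · exact le_refl 0
    · have hSIe : S ∩ I = ∅ := by
        by_contra hne
        rw [hh] at hone; dsimp only at hone
        rw [if_pos (Finset.nonempty_iff_ne_empty.mpr hne)] at hone
        exact hone rfl
      have hSnotI : ¬ (S ∩ I).Nonempty := by rw [hSIe]; simp
      have hck : c * (S.card : ℝ) < 1 := by
        by_contra hge
        push_neg at hge
        rw [hh] at hone; dsimp only at hone
        rw [if_neg hSnotI, min_eq_left hge] at hone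
        exact hone rfl
      have hhS : h S = c * (S.card : ℝ) := by
        rw [hh]; dsimp only; rw [if_neg hSnotI, min_eq_right hck.le]
      have hSK : S ⊆ K := by
        intro x hx
        rcases hKIv x with hxK | hxI
        · exact hxK
        · exact absurd (Finset.mem_inter.mpr ⟨hx, hxI⟩) (by rw [hSIe]; simp)
      have hk1 : 1 ≤ S.card := Finset.card_pos.mpr (Finset.nonempty_iff_ne_empty.mpr hS0)
      have hkm : S.card ≤ m := hK ▸ Finset.card_le_card hSK
      have hk1R : (1:ℝ) ≤ (S.card:ℝ) := by exact_mod_cast hk1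
      have hkmR : (S.card:ℝ) ≤ (m:ℝ) := by exact_mod_cast hkm
      set kR : ℝ := (S.card : ℝ) with hkR
      set Mv : ℝ := min 1 (c * (kR + 1)) with hMv
      have hSc : Sᶜ = (K \ S) ∪ I := by
        ext b
        simp only [Finset.mem_compl, Finset.mem_union, Finset.mem_sdiff]
        constructor
        · intro hbS
          rcases hKIv b with hb | hb
          · exact Or.inl ⟨hb, hbS⟩
          · exact Or.inr hb
        · rintro (⟨-, hbS⟩ | hbI)
          · exact hbS
          · intro hbS
            exact absurd (Finset.mem_inter.mpr ⟨hbS, hbI⟩) (by rw [hSIe]; simp)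
      have hdisj2 : Disjoint (K \ S) I := hKI.mono_left Finset.sdiff_subset
      have hers : ∀ a ∈ S, h (S.erase a) = c * (kR - 1) := by
        intro a ha
        have he : ¬ ((S.erase a) ∩ I).Nonempty := by
          rw [Finset.not_nonempty_iff_eq_empty, ← Finset.subset_empty, ← hSIe]
          exact Finset.inter_subset_inter (Finset.erase_subset a S) (le_refl I)
        rw [hh]; dsimp only
        rw [if_neg he, Finset.card_erase_of_mem ha]
        have hcast : ((S.card - 1 : ℕ) : ℝ) = kR - 1 := by
          push_cast [Nat.cast_sub hk1]; ring
        rw [hcast, min_eq_right]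
        have : c * (kR - 1) ≤ c * kR := by nlinarith
        linarith
      have hinsK : ∀ b ∈ K \ S, h (insert b S) = Mv := by
        intro b hb
        obtain ⟨hbK, hbS⟩ := Finset.mem_sdiff.mp hb
        have hbI : b ∉ I := Finset.disjoint_left.mp hKI hbK
        have he : ¬ ((insert b S) ∩ I).Nonempty := by
          rw [Finset.not_nonempty_iff_eq_empty, Finset.insert_inter_of_notMem hbI]
          exact hSIe
        rw [hh]; dsimp only
        rw [if_neg he, Finset.card_insert_of_notMem hbS]
        have hcast : ((S.card + 1 : ℕ) : ℝ) = kR + 1 := by push_cast; ring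
        rw [hcast]
      have hinsI : ∀ b ∈ I, h (insert b S) = 1 := by
        intro b hb
        rw [hh]; dsimp only
        rw [if_pos ⟨b, Finset.mem_inter.mpr ⟨Finset.mem_insert_self b S, hb⟩⟩]
      have hcardsd : ((m - S.card : ℕ) : ℝ) = (m:ℝ) - kR := by
        push_cast [Nat.cast_sub hkm]; ring
      have hWa : ∀ a ∈ S, ∑ b ∈ Sᶜ,
            (if G.Adj a b then r / (G.degree a : ℝ) + 1 / (G.degree b : ℝ) else 0)
          = ((m:ℝ)-kR)*(r/((m:ℝ)-1+(φ:ℝ)^2) + 1/((m:ℝ)-1+(φ:ℝ)^2))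
            + (φ:ℝ)^2*(r/((m:ℝ)-1+(φ:ℝ)^2) + 1/(φ:ℝ)) := by
        intro a ha
        have haK := hSK ha
        have hda := hdK a haK
        rw [hSc, Finset.sum_union hdisj2]
        have e1 : ∀ b ∈ K \ S,
            (if G.Adj a b then r / (G.degree a : ℝ) + 1 / (G.degree b : ℝ) else 0)
            = r/((m:ℝ)-1+(φ:ℝ)^2) + 1/((m:ℝ)-1+(φ:ℝ)^2) := by
          intro b hb
          obtain ⟨hbK, hbS⟩ := Finset.mem_sdiff.mp hb
          have hab : G.Adj a b := hKK a haK b hbK (fun e => hbS (e ▸ ha))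
          rw [if_pos hab, hda, hdK b hbK]
        have e2 : ∀ b ∈ I,
            (if G.Adj a b then r / (G.degree a : ℝ) + 1 / (G.degree b : ℝ) else 0)
            = (if G.Adj a b then r/((m:ℝ)-1+(φ:ℝ)^2) + 1/(φ:ℝ) else 0) := by
          intro b hb
          by_cases hab : G.Adj a b
          · rw [if_pos hab, if_pos hab, hda, hdI b hb]
          · rw [if_neg hab, if_neg hab]
        rw [Finset.sum_congr rfl e1, Finset.sum_congr rfl e2, ← Finset.sum_filter,
          Finset.sum_const, Finset.sum_const, Finset.card_sdiff_of_subset hSK, hK]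
        have hfc : (Finset.filter (fun b => G.Adj a b) I).card = φ^2 := hKdeg a haK
        rw [hfc, nsmul_eq_mul, nsmul_eq_mul, hcardsd]
        push_cast
        ring
      have hFa : ∀ a ∈ S, ∑ b ∈ Sᶜ,
            (if G.Adj a b then r / (G.degree a : ℝ) * h (insert b S)
              + 1 / (G.degree b : ℝ) * h (S.erase a) else 0)
          = ((m:ℝ)-kR)*(r/((m:ℝ)-1+(φ:ℝ)^2)*Mv + 1/((m:ℝ)-1+(φ:ℝ)^2)*(c*(kR-1)))
            + (φ:ℝ)^2*(r/((m:ℝ)-1+(φ:ℝ)^2)*1 + 1/(φ:ℝ)*(c*(kR-1))) := by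
        intro a ha
        have haK := hSK ha
        have hda := hdK a haK
        have hersa := hers a ha
        rw [hSc, Finset.sum_union hdisj2]
        have e1 : ∀ b ∈ K \ S,
            (if G.Adj a b then r / (G.degree a : ℝ) * h (insert b S)
              + 1 / (G.degree b : ℝ) * h (S.erase a) else 0)
            = r/((m:ℝ)-1+(φ:ℝ)^2)*Mv + 1/((m:ℝ)-1+(φ:ℝ)^2)*(c*(kR-1)) := by
          intro b hb
          obtain ⟨hbK, hbS⟩ := Finset.mem_sdiff.mp hb
          have hab : G.Adj a b := hKK a haK b hbK (fun e => hbS (e ▸ ha))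
          rw [if_pos hab, hda, hdK b hbK, hinsK b hb, hersa]
        have e2 : ∀ b ∈ I,
            (if G.Adj a b then r / (G.degree a : ℝ) * h (insert b S)
              + 1 / (G.degree b : ℝ) * h (S.erase a) else 0)
            = (if G.Adj a b then r/((m:ℝ)-1+(φ:ℝ)^2)*1 + 1/(φ:ℝ)*(c*(kR-1)) else 0) := by
          intro b hb
          by_cases hab : G.Adj a b
          · rw [if_pos hab, if_pos hab, hda, hdI b hb, hinsI b hb, hersa]
          · rw [if_neg hab, if_neg hab]
        rw [Finset.sum_congr rfl e1, Finset.sum_congr rfl e2, ← Finset.sum_filter,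
          Finset.sum_const, Finset.sum_const, Finset.card_sdiff_of_subset hSK, hK]
        have hfc : (Finset.filter (fun b => G.Adj a b) I).card = φ^2 := hKdeg a haK
        rw [hfc, nsmul_eq_mul, nsmul_eq_mul, hcardsd]
        push_cast
        ring
      rw [Finset.sum_congr rfl hFa, Finset.sum_congr rfl hWa, hhS, Finset.mul_sum]
      refine Finset.sum_le_sum fun a _ => ?_
      refine urchin_arith r (φ:ℝ) (m:ℝ) kR c Mv hr h2r (by linarith) hk1R hkmR hc hck.le
        ?_ (le_min zero_le_one (by positivity))
      calc Mv ≤ c * (kR + 1) := min_le_right _ _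
        _ = c * kR + c := by ring
  have hφpos : 0 < φ := hφ1n
  have hcross : ∀ S : Finset V, S ≠ ∅ → S ≠ Finset.univ →
      ∃ a ∈ S, ∃ b ∈ Sᶜ, G.Adj a b := by
    intro S hS0 hSu
    by_cases hKS : K ⊆ S
    · obtain ⟨b, hbS⟩ : ∃ b, b ∉ S := by
        by_contra hall
        push_neg at hall
        exact hSu (Finset.eq_univ_iff_forall.mpr hall)
      have hb : b ∈ Sᶜ := Finset.mem_compl.mpr hbS
      have hbI : b ∈ I := (hKIv b).resolve_left (fun hbK => hbS (hKS hbK))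
      have hfil : (K.filter (G.Adj b)).Nonempty := by
        rw [← Finset.card_pos, hIdeg b hbI]; exact hφpos
      obtain ⟨a, ha⟩ := hfil
      obtain ⟨haK, hab⟩ := Finset.mem_filter.mp ha
      exact ⟨a, hKS haK, b, hb, hab.symm⟩
    · obtain ⟨u, huK, huS⟩ := Finset.not_subset.mp hKS
      by_cases hSKne : (S ∩ K).Nonempty
      · obtain ⟨a, ha⟩ := hSKne
        obtain ⟨haS, haK⟩ := Finset.mem_inter.mp ha
        refine ⟨a, haS, u, Finset.mem_compl.mpr huS, hKK a haK u huK ?_⟩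
        exact fun e => huS (e ▸ haS)
      · obtain ⟨a, haS⟩ := Finset.nonempty_iff_ne_empty.mpr hS0
        have haI : a ∈ I := by
          rcases hKIv a with haK | haI
          · exact absurd ⟨a, Finset.mem_inter.mpr ⟨haS, haK⟩⟩ hSKne
          · exact haI
        have hfil : (K.filter (G.Adj a)).Nonempty := by
          rw [← Finset.card_pos, hIdeg a haI]; exact hφpos
        obtain ⟨b, hb⟩ := hfil
        obtain ⟨hbK, hab⟩ := Finset.mem_filter.mp hb
        have hbS : b ∉ S := by
          intro hbS
          exact absurd ⟨b, Finset.mem_inter.mpr ⟨hbS, hbK⟩⟩ hSKne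
        exact ⟨a, haS, b, Finset.mem_compl.mpr hbS, hab⟩
  -- discrete maximum principle: f ≤ h
  have hmain : ∀ T : Finset V, f T ≤ h T := by
    obtain ⟨S₀, -, hS₀⟩ := Finset.exists_max_image (Finset.univ : Finset (Finset V))
      (fun T => f T - h T) ⟨∅, Finset.mem_univ ∅⟩
    have hS₀' : ∀ T : Finset V, f T - h T ≤ f S₀ - h S₀ :=
      fun T => hS₀ T (Finset.mem_univ T)
    set d : ℝ := f S₀ - h S₀ with hd
    have hdle : d ≤ 0 := by
      by_contra hdpos
      push_neg at hdpos
      set Mx : Finset (Finset V) :=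
        Finset.univ.filter (fun T => d ≤ f T - h T) with hMx
      have hS₀M : S₀ ∈ Mx := Finset.mem_filter.mpr ⟨Finset.mem_univ _, le_refl d⟩
      obtain ⟨St, hStM, hStmax⟩ := Finset.exists_max_image Mx
        (fun T => T.card) ⟨S₀, hS₀M⟩
      have hdSt : f St - h St = d :=
        le_antisymm (hS₀' St) (Finset.mem_filter.mp hStM).2
      have hStne : St ≠ ∅ := by
        intro he
        rw [he, hfix.2.1, hhempty] at hdSt
        simp at hdSt
        exact absurd hdSt.symm (ne_of_gt hdpos)
      have hStnu : St ≠ Finset.univ := by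
        intro he
        rw [he, hfix.2.2.1, hhuniv] at hdSt
        simp at hdSt
        exact absurd hdSt.symm (ne_of_gt hdpos)
      have hbal := hfix.2.2.2 St hStne hStnu
      have hsup := hsuper St hStne hStnu
      -- the compensated sum
      have ekey : ∑ a ∈ St, ∑ b ∈ Stᶜ,
            (if G.Adj a b then
              r / (G.degree a : ℝ) * (d - (f (insert b St) - h (insert b St)))
              + 1 / (G.degree b : ℝ) * (d - (f (St.erase a) - h (St.erase a))) else 0)
          = d * (∑ a ∈ St, ∑ b ∈ Stᶜ,
              (if G.Adj a b then r / (G.degree a : ℝ) + 1 / (G.degree b : ℝ) else 0))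
            - ((∑ a ∈ St, ∑ b ∈ Stᶜ,
              (if G.Adj a b then r / (G.degree a : ℝ) * f (insert b St)
                + 1 / (G.degree b : ℝ) * f (St.erase a) else 0))
            - (∑ a ∈ St, ∑ b ∈ Stᶜ,
              (if G.Adj a b then r / (G.degree a : ℝ) * h (insert b St)
                + 1 / (G.degree b : ℝ) * h (St.erase a) else 0))) := by
        rw [Finset.mul_sum]
        rw [← Finset.sum_sub_distrib, ← Finset.sum_sub_distrib]
        refine Finset.sum_congr rfl fun a _ => ?_
        rw [Finset.mul_sum, ← Finset.sum_sub_distrib, ← Finset.sum_sub_distrib]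
        refine Finset.sum_congr rfl fun b _ => ?_
        split_ifs with hab
        · ring
        · ring
      have hkey : ∑ a ∈ St, ∑ b ∈ Stᶜ,
            (if G.Adj a b then
              r / (G.degree a : ℝ) * (d - (f (insert b St) - h (insert b St)))
              + 1 / (G.degree b : ℝ) * (d - (f (St.erase a) - h (St.erase a))) else 0)
          ≤ 0 := by
        rw [ekey]
        have hW : (f St - h St) * (∑ a ∈ St, ∑ b ∈ Stᶜ,
            (if G.Adj a b then r / (G.degree a : ℝ) + 1 / (G.degree b : ℝ) else 0))
            = d * (∑ a ∈ St, ∑ b ∈ Stᶜ,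
            (if G.Adj a b then r / (G.degree a : ℝ) + 1 / (G.degree b : ℝ) else 0)) := by
          rw [hdSt]
        rw [sub_mul] at hW
        linarith
      have htnn : ∀ a ∈ St, ∀ b ∈ Stᶜ,
          0 ≤ (if G.Adj a b then
              r / (G.degree a : ℝ) * (d - (f (insert b St) - h (insert b St)))
              + 1 / (G.degree b : ℝ) * (d - (f (St.erase a) - h (St.erase a))) else 0) := by
        intro a _ b _
        split_ifs with hab
        · have h1 : 0 ≤ r / (G.degree a : ℝ) := div_nonneg hr0.le (Nat.cast_nonneg _)
          have h2 : 0 ≤ 1 / (G.degree b : ℝ) := div_nonneg zero_le_one (Nat.cast_nonneg _)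
          have h3 : 0 ≤ d - (f (insert b St) - h (insert b St)) :=
            sub_nonneg.mpr (hS₀' _)
          have h4 : 0 ≤ d - (f (St.erase a) - h (St.erase a)) :=
            sub_nonneg.mpr (hS₀' _)
          exact add_nonneg (mul_nonneg h1 h3) (mul_nonneg h2 h4)
        · exact le_refl 0
      have hzero : ∑ a ∈ St, ∑ b ∈ Stᶜ,
            (if G.Adj a b then
              r / (G.degree a : ℝ) * (d - (f (insert b St) - h (insert b St)))
              + 1 / (G.degree b : ℝ) * (d - (f (St.erase a) - h (St.erase a))) else 0)
          = 0 :=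
        le_antisymm hkey (Finset.sum_nonneg fun a ha =>
          Finset.sum_nonneg fun b hb => htnn a ha b hb)
      obtain ⟨a₀, ha₀, b₀, hb₀, hab₀⟩ := hcross St hStne hStnu
      have hinner : ∑ b ∈ Stᶜ,
            (if G.Adj a₀ b then
              r / (G.degree a₀ : ℝ) * (d - (f (insert b St) - h (insert b St)))
              + 1 / (G.degree b : ℝ) * (d - (f (St.erase a₀) - h (St.erase a₀))) else 0)
          = 0 :=
        (Finset.sum_eq_zero_iff_of_nonneg fun a ha =>
          Finset.sum_nonneg fun b hb => htnn a ha b hb).mp hzero a₀ ha₀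
      have hterm : (if G.Adj a₀ b₀ then
              r / (G.degree a₀ : ℝ) * (d - (f (insert b₀ St) - h (insert b₀ St)))
              + 1 / (G.degree b₀ : ℝ) * (d - (f (St.erase a₀) - h (St.erase a₀))) else 0)
          = 0 :=
        (Finset.sum_eq_zero_iff_of_nonneg fun b hb => htnn a₀ ha₀ b hb).mp hinner b₀ hb₀
      rw [if_pos hab₀] at hterm
      have hdeg : 0 < G.degree a₀ := G.degree_pos_iff_exists_adj a₀ |>.mpr ⟨b₀, hab₀⟩
      have hA : 0 < r / (G.degree a₀ : ℝ) := div_pos hr0 (by exact_mod_cast hdeg)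
      have h3 : 0 ≤ d - (f (insert b₀ St) - h (insert b₀ St)) := sub_nonneg.mpr (hS₀' _)
      have h2 : 0 ≤ 1 / (G.degree b₀ : ℝ) := div_nonneg zero_le_one (Nat.cast_nonneg _)
      have h4 : 0 ≤ d - (f (St.erase a₀) - h (St.erase a₀)) := sub_nonneg.mpr (hS₀' _)
      have hins : f (insert b₀ St) - h (insert b₀ St) = d := by
        rcases eq_or_lt_of_le h3 with he | hlt
        · linarith [he]
        · exfalso
          nlinarith [mul_pos hA hlt, mul_nonneg h2 h4]
      have hinsM : insert b₀ St ∈ Mx :=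
        Finset.mem_filter.mpr ⟨Finset.mem_univ _, le_of_eq hins.symm⟩
      have hb₀S : b₀ ∉ St := Finset.mem_compl.mp hb₀
      have hcard : (insert b₀ St).card = St.card + 1 := Finset.card_insert_of_notMem hb₀S
      have := hStmax (insert b₀ St) hinsM
      simp only [hcard] at this
      omega
    intro T
    have := hS₀' T
    linarith
  -- conclusion
  have hfv : f {v} ≤ h {v} := hmain {v}
  have hvnotI : v ∉ I := Finset.disjoint_left.mp hKI hv
  have hhv : h {v} = min 1 c := by
    rw [hh]; dsimp only
    rw [if_neg, Finset.card_singleton]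
    · norm_num
    · rintro ⟨x, hx⟩
      obtain ⟨hx1, hx2⟩ := Finset.mem_inter.mp hx
      rw [Finset.mem_singleton] at hx1
      exact hvnotI (hx1 ▸ hx2)
  have hcc : c < 5 * r * (φ:ℝ) / (m:ℝ) := by
    rw [hc, div_lt_div_iff₀ hm0R hm0R]
    nlinarith [mul_pos (mul_pos hr0 hφ0R) hm0R]
  calc f {v} ≤ h {v} := hfv
    _ = min 1 c := hhv
    _ ≤ c := min_le_right _ _
    _ < 5 * r * (φ:ℝ) / (m:ℝ) := hcc
end

section
/- For all integers n and k with 1 ≤ k ≤ n−2 and n+k even, Σ_{i=k+1}^{(n+k)/2} (i−k)/(i·n) > (n−k)²/(4·n·(n+3k)). -/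
/-- Mediant-type pair estimate. -/
lemma mediant_pair (K I J N : ℝ) (hK : 1 ≤ K) (hI : K + 1 ≤ I) (hJ : K + 1 ≤ J)
    (hN : 0 < N) :
    (I + J - 2*K) / ((I + J) * N) < (I - K) / (I * N) + (J - K) / (J * N) := by
  have hI0 : 0 < I := by linarith
  have hJ0 : 0 < J := by linarith
  have key : K * (I^2 + J^2) < I * J * (I + J) := by
    nlinarith [mul_pos (mul_pos hI0 hI0) (show (0:ℝ) < J - K by linarith),
      mul_pos (mul_pos hJ0 hJ0) (show (0:ℝ) < I - K by linarith)]
  rw [div_add_div _ _ (by positivity) (by positivity),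
    div_lt_div_iff₀ (by positivity) (by positivity)]
  nlinarith [mul_pos (mul_pos hN hN) (show (0:ℝ) < I * J * (I + J) - K * (I^2 + J^2) by linarith)]

/-- The key summation estimate:
`Σ_{i=k+1}^{(n+k)/2} (i-k)/(i·n) > (n-k)²/(4·n·(n+3k))` for `1 ≤ k ≤ n-2` with `n+k`
even. -/
theorem pairing_sum_lower_bound (n k : ℕ) (hk1 : 1 ≤ k) (hk2 : k + 2 ≤ n)
    (heven : Even (n + k)) :
    ∑ i ∈ Finset.Icc (k + 1) ((n + k) / 2), ((i : ℝ) - k) / ((i : ℝ) * n)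
      > ((n : ℝ) - k) ^ 2 / (4 * (n : ℝ) * ((n : ℝ) + 3 * k)) := by
  obtain ⟨m, hm⟩ := heven
  have hm2 : (n + k) / 2 = m := by omega
  have hkm : k + 1 ≤ m := by omega
  rw [hm2]
  set f : ℕ → ℝ := fun i => ((i : ℝ) - k) / ((i : ℝ) * n) with hf
  have hN0 : (0:ℝ) < (n:ℝ) := by
    have : 0 < n := by omega
    exact_mod_cast this
  have hK1 : (1:ℝ) ≤ (k:ℝ) := by exact_mod_cast hk1
  -- rewrite as a range sum
  have hIcc : ∑ i ∈ Finset.Icc (k + 1) m, f i = ∑ j ∈ Finset.range (m - k), f (k + 1 + j) := by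
    rw [← Finset.Ico_add_one_right_eq_Icc, Finset.sum_Ico_eq_sum_range]
    have h : m + 1 - (k + 1) = m - k := by omega
    rw [h]
  have hrefl : ∑ j ∈ Finset.range (m - k), f (k + 1 + j)
      = ∑ j ∈ Finset.range (m - k), f (m - j) := by
    rw [← Finset.sum_range_reflect]
    apply Finset.sum_congr rfl
    intro j hj
    rw [Finset.mem_range] at hj
    congr 1
    omega
  set c : ℝ := ((m:ℝ) + 1 - k) / (((m:ℝ) + k + 1) * n) with hc
  have key : ∀ j ∈ Finset.range (m - k), c < f (k + 1 + j) + f (m - j) := by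
    intro j hj
    rw [Finset.mem_range] at hj
    have h1 : ((k + 1 + j : ℕ) : ℝ) = (k:ℝ) + 1 + j := by push_cast; ring
    have h2 : ((m - j : ℕ) : ℝ) = (m:ℝ) - j := by
      have : j ≤ m := by omega
      push_cast [this]; ring
    have := mediant_pair (k:ℝ) ((k:ℝ) + 1 + j) ((m:ℝ) - j) (n:ℝ) hK1
      (by linarith [show (0:ℝ) ≤ (j:ℝ) from Nat.cast_nonneg j])
      (by
        have : (j:ℝ) ≤ (m:ℝ) - (k:ℝ) - 1 := by
          have : j + k + 1 ≤ m := by omega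
          have := (Nat.cast_le (α := ℝ)).mpr this
          push_cast at this; linarith
        linarith) hN0
    have heq : ((k:ℝ) + 1 + j) + ((m:ℝ) - j) - 2*k = (m:ℝ) + 1 - k := by ring
    have heq2 : ((k:ℝ) + 1 + j) + ((m:ℝ) - j) = (m:ℝ) + k + 1 := by ring
    rw [heq, heq2] at this
    simpa [hf, h1, h2, hc] using this
  have hsum : ∑ j ∈ Finset.range (m - k), c
      < ∑ j ∈ Finset.range (m - k), (f (k + 1 + j) + f (m - j)) := by
    apply Finset.sum_lt_sum_of_nonempty
    · rw [Finset.nonempty_range_iff]; omega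
    · exact key
  have hcard : ∑ j ∈ Finset.range (m - k), c = ((m:ℝ) - k) * c := by
    rw [Finset.sum_const, Finset.card_range, nsmul_eq_mul]
    congr 1
    have : k ≤ m := by omega
    push_cast [this]; ring
  rw [Finset.sum_add_distrib, ← hrefl, hcard] at hsum
  -- hsum : (m - k) * c < 2 * S  (as S + S)
  set S := ∑ j ∈ Finset.range (m - k), f (k + 1 + j) with hSdef
  rw [hIcc]
  have hnr : (n:ℝ) = 2 * (m:ℝ) - k := by
    have : n + k = 2 * m := by omega
    have := (Nat.cast_inj (R := ℝ)).mpr this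
    push_cast at this
    linarith
  have hMK : (k:ℝ) + 1 ≤ (m:ℝ) := by exact_mod_cast hkm
  have hcval : ((m:ℝ) - k) * c / 2 = (((m:ℝ) - k) * ((m:ℝ) + 1 - k)) / ((((m:ℝ) + k + 1) * n) * 2) := by
    have hB : ((m:ℝ) + k + 1) * n ≠ 0 := by positivity
    rw [hc]
    field_simp
  have hfinal : ((n : ℝ) - k) ^ 2 / (4 * (n : ℝ) * ((n : ℝ) + 3 * k)) ≤ ((m:ℝ) - k) * c / 2 := by
    rw [hcval, hnr]
    rw [div_le_div_iff₀ (by nlinarith) (by nlinarith)]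
    nlinarith [mul_pos (show (0:ℝ) < (m:ℝ) - k by linarith) (show (0:ℝ) < (k:ℝ) by linarith),
      sq_nonneg ((m:ℝ) - k), mul_pos (show (0:ℝ) < (m:ℝ) - k by linarith) (show (0:ℝ) < 2*(m:ℝ) - k by linarith)]
  have : ((m:ℝ) - k) * c / 2 < S := by linarith
  linarith
end
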